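/- arXiv:0707.1838 — 8 statements merged into one kernel-verified Lean document; each statement's English description precedes it below -/
import Mathlib

section
/- Let m, p, q be integers with 0 ≤ q ≤ p and p + q ≤ m, and let X be an m-by-m complex unitary matrix. Then there exist unitary matrices U₁ ∈ U(p), U₂ ∈ U(m−p), V₁ ∈ U(q), V₂ ∈ U(m−q) and angles θ₁, …, θ_q ∈ [0, π/2] such that, with C = diag(cos θ₁, …, cos θ_q) and S = diag(sin θ₁, …, sin θ_q), X = diag(U₁, U₂) · Σ · diag(V₁, V₂)*, where Σ is the m-by-m real matrix whose block structure (rows partitioned as q, p−q, q, m−p−q and columns partitioned as q, q, p−q, m−p−q) is [[C, S, 0, 0], [0, 0, I_{p−q}, 0], [−S, C, 0, 0], [0, 0, 0, I_{m−p−q}]]. -/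
open Matrix

/-- The middle factor Σ of the complete CS decomposition: an `m × m` real matrix
whose rows are partitioned as `q, p-q, q, m-p-q` and columns as `q, q, p-q, m-p-q`,
with block structure `[[C, S, 0, 0], [0, 0, I, 0], [-S, C, 0, 0], [0, 0, 0, I]]`. -/
noncomputable def csdSigma (m p q : ℕ) (θ : Fin q → ℝ) : Matrix (Fin m) (Fin m) ℝ :=
  fun i j =>
    if hi : i.val < q then
      (if j.val = i.val then Real.cos (θ ⟨i.val, hi⟩) else 0) +
      (if j.val = i.val + q then Real.sin (θ ⟨i.val, hi⟩) else 0)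
    else if hi2 : i.val < p then
      if j.val = i.val + q then 1 else 0
    else if hi3 : i.val < p + q then
      (if j.val = i.val - p then -Real.sin (θ ⟨i.val - p, by omega⟩) else 0) +
      (if j.val = i.val - p + q then Real.cos (θ ⟨i.val - p, by omega⟩) else 0)
    else
      if j = i then 1 else 0

/-- The block diagonal matrix `diag(A, B)` of sizes `k` and `m - k`, viewed as an
`m × m` matrix (for `k ≤ m`). -/
def blockDiagC (m k : ℕ) (h : k ≤ m) (A : Matrix (Fin k) (Fin k) ℂ)
    (B : Matrix (Fin (m - k)) (Fin (m - k)) ℂ) : Matrix (Fin m) (Fin m) ℂ :=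
  Matrix.reindex (finSumFinEquiv.trans (finCongr (Nat.add_sub_cancel' h)))
    (finSumFinEquiv.trans (finCongr (Nat.add_sub_cancel' h)))
    (Matrix.fromBlocks A 0 0 B)

/-!
Write the first `q` columns of `X` as `[A; B]`, so that `Aᴴ A + Bᴴ B = 1`. Diagonalising
`Aᴴ A = V₁ C² V₁ᴴ` makes the columns of `A V₁` and `B V₁` orthogonal with norms `cos θᵢ` and
`sin θᵢ`; completing their normalisations to unitary matrices `U₁`, `U₂` shows that
`X diag(V₁, I)` and `diag(U₁, U₂) Σ` have the same first `q` columns. Two unitary matrices with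
the same first block of columns differ by a unitary acting on the remaining columns, which is
`V₂ᴴ`.
-/

open scoped ComplexOrder

namespace Matrix

theorem mul_submatrix_id_one {R l m n : Type*} [Fintype n] [DecidableEq n] [NonAssocSemiring R]
    (U : Matrix m n R) (f : l → n) : U * (1 : Matrix n n R).submatrix id f = U.submatrix id f :=
  mul_submatrix_one (Equiv.refl n) f U

theorem mul_toCols₁ {R l m n₁ n₂ : Type*} [Fintype m] [NonUnitalNonAssocSemiring R]
    (A : Matrix l m R) (B : Matrix m (n₁ ⊕ n₂) R) : (A * B).toCols₁ = A * B.toCols₁ :=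
  rfl

variable {𝕜 : Type*} [RCLike 𝕜] {l n o κ κ₁ κ₂ ι₁ ι₂ : Type*}

theorem conjTranspose_toCols₁_mul_toCols₁ [Fintype n] [DecidableEq κ₁] [DecidableEq κ₂]
    {Y : Matrix n (κ₁ ⊕ κ₂) 𝕜} (hY : Yᴴ * Y = 1) : Y.toCols₁ᴴ * Y.toCols₁ = 1 := by
  ext i j
  simpa [mul_apply, one_apply] using congrFun₂ hY (.inl i) (.inl j)

theorem conjTranspose_submatrix_mul_self [Fintype l] [Fintype n] [DecidableEq n] [DecidableEq o]
    {Q : Matrix n n 𝕜} (hQ : Q ∈ unitaryGroup n 𝕜) (e₁ : l ≃ n) (e₂ : o ≃ n) :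
    (Q.submatrix e₁ e₂)ᴴ * Q.submatrix e₁ e₂ = 1 := by
  rw [conjTranspose_submatrix, submatrix_mul_equiv, ← star_eq_conjTranspose,
    Unitary.star_mul_self_of_mem hQ, submatrix_one_equiv]

theorem submatrix_mul_conjTranspose_self [Fintype n] [DecidableEq n] [Fintype o] [DecidableEq l]
    {Q : Matrix n n 𝕜} (hQ : Q ∈ unitaryGroup n 𝕜) (e₁ : l ≃ n) (e₂ : o ≃ n) :
    Q.submatrix e₁ e₂ * (Q.submatrix e₁ e₂)ᴴ = 1 := by
  rw [conjTranspose_submatrix, submatrix_mul_equiv, ← star_eq_conjTranspose,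
    Unitary.mul_star_self_of_mem hQ, submatrix_one_equiv]

theorem fromBlocks_mem_unitaryGroup [Fintype κ₁] [DecidableEq κ₁] [Fintype κ₂] [DecidableEq κ₂]
    {A : Matrix κ₁ κ₁ 𝕜} {B : Matrix κ₂ κ₂ 𝕜} (hA : A ∈ unitaryGroup κ₁ 𝕜)
    (hB : B ∈ unitaryGroup κ₂ 𝕜) :
    fromBlocks A 0 0 B ∈ unitaryGroup (κ₁ ⊕ κ₂) 𝕜 := by
  rw [mem_unitaryGroup_iff', star_eq_conjTranspose] at *
  simp [fromBlocks_conjTranspose, fromBlocks_multiply, hA, hB]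

theorem map_ofReal_mem_unitaryGroup [Fintype n] [DecidableEq n] {Q : Matrix n n ℝ}
    (hQ : Q ∈ orthogonalGroup n ℝ) : Q.map Complex.ofReal ∈ unitaryGroup n ℂ := by
  rw [mem_unitaryGroup_iff, star_eq_conjTranspose,
    ← conjTranspose_map _ fun _ => (Complex.conj_ofReal _).symm,
    conjTranspose_eq_transpose_of_trivial]
  calc Q.map Complex.ofReal * Qᵀ.map Complex.ofReal = (Q * Qᵀ).map Complex.ofRealHom :=
        (Matrix.map_mul (f := Complex.ofRealHom)).symm
    _ = 1 := by simp [(mem_orthogonalGroup_iff _ _).1 hQ]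

theorem exists_unitary_submatrix_mul_diagonal_sqrt [Fintype n] [DecidableEq n] [Fintype κ]
    [DecidableEq κ] (f : κ ↪ n) (M : Matrix n κ 𝕜) (d : κ → ℝ)
    (hM : Mᴴ * M = diagonal fun i => (d i : 𝕜)) :
    ∃ U ∈ unitaryGroup n 𝕜, M = U.submatrix id f * diagonal fun i => (√(d i) : 𝕜) := by
  let col : κ → EuclideanSpace 𝕜 n := fun i => WithLp.toLp 2 fun k => M k i
  have hinner (i j : κ) : inner 𝕜 (col i) (col j) = (Mᴴ * M) i j := by
    rw [EuclideanSpace.inner_toLp_toLp, dotProduct_comm]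
    rfl
  have hnorm (i : κ) : ‖col i‖ = √(d i) := by
    have h : ‖col i‖ ^ 2 = d i := by
      have := inner_self_eq_norm_sq_to_K (𝕜 := 𝕜) (col i)
      rw [hinner, hM, diagonal_apply_eq] at this
      exact_mod_cast this.symm
    rw [← h, Real.sqrt_sq (norm_nonneg _)]
  -- Zero columns of `M` impose nothing on `U`; the normalised nonzero columns are completed to an
  -- orthonormal basis.
  let v : n → EuclideanSpace 𝕜 n := Function.extend f (fun i => (‖col i‖⁻¹ : 𝕜) • col i) 0
  have hv (i : κ) : v (f i) = (‖col i‖⁻¹ : 𝕜) • col i := f.injective.extend_apply _ _ _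
  have hortho : Orthonormal 𝕜 ((f '' {i | col i ≠ 0}).domRestrict v) := by
    constructor
    · rintro ⟨_, i, hi, rfl⟩
      change ‖v (f i)‖ = 1
      rw [hv]
      exact norm_smul_inv_norm hi
    · rintro ⟨_, i, hi, rfl⟩ ⟨_, j, hj, rfl⟩ hfij
      have hij : i ≠ j := by rintro rfl; exact hfij rfl
      change inner 𝕜 (v (f i)) (v (f j)) = 0
      rw [hv, hv, inner_smul_left, inner_smul_right, hinner, hM, diagonal_apply_ne _ hij,
        mul_zero, mul_zero]
  obtain ⟨b, hb⟩ := hortho.exists_orthonormalBasis_extension_of_card_eq finrank_euclideanSpace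
  refine ⟨(EuclideanSpace.basisFun n 𝕜).toBasis.toMatrix b.toBasis,
    (EuclideanSpace.basisFun n 𝕜).toMatrix_orthonormalBasis_mem_unitary b, ?_⟩
  ext k i
  rw [mul_diagonal, submatrix_apply, id, ← hnorm]
  by_cases hi : col i = 0
  · simp [hi, show M k i = col i k from rfl]
  · have hi' : (‖col i‖ : 𝕜) ≠ 0 := by exact_mod_cast norm_ne_zero_iff.mpr hi
    simp only [Module.Basis.toMatrix_apply, OrthonormalBasis.coe_toBasis_repr_apply,
      EuclideanSpace.basisFun_repr, OrthonormalBasis.coe_toBasis, hb _ ⟨i, hi, rfl⟩, hv,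
      PiLp.smul_apply, smul_eq_mul]
    rw [mul_right_comm, inv_mul_cancel₀ hi', one_mul]

theorem exists_eq_fromBlocks_one_of_toCols₁_eq [Fintype κ₁] [DecidableEq κ₁] [Fintype κ₂]
    [DecidableEq κ₂] {W : Matrix (κ₁ ⊕ κ₂) (κ₁ ⊕ κ₂) 𝕜} (hW : W ∈ unitaryGroup (κ₁ ⊕ κ₂) 𝕜)
    (hcol : W.toCols₁ = (1 : Matrix (κ₁ ⊕ κ₂) (κ₁ ⊕ κ₂) 𝕜).toCols₁) :
    ∃ V ∈ unitaryGroup κ₂ 𝕜, W = fromBlocks 1 0 0 V := by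
  have h₁₁ : W.toBlocks₁₁ = 1 := by
    ext i j
    simpa [toBlocks₁₁, one_apply] using congrFun₂ hcol (.inl i) j
  have h₂₁ : W.toBlocks₂₁ = 0 := by
    ext i j
    simpa [toBlocks₂₁] using congrFun₂ hcol (.inr i) j
  have hWW := mem_unitaryGroup_iff'.mp hW
  rw [star_eq_conjTranspose, ← fromBlocks_toBlocks W, h₁₁, h₂₁, fromBlocks_conjTranspose,
    fromBlocks_multiply, ← fromBlocks_one, fromBlocks_inj] at hWW
  simp only [conjTranspose_one, conjTranspose_zero, conjTranspose_eq_zero, Matrix.one_mul,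
    Matrix.mul_one, Matrix.zero_mul, Matrix.mul_zero, add_zero, and_self_left, true_and] at hWW
  obtain ⟨h₁₂, h₂₂⟩ := hWW
  rw [h₁₂, conjTranspose_zero, Matrix.zero_mul, zero_add] at h₂₂
  refine ⟨W.toBlocks₂₂, mem_unitaryGroup_iff'.mpr h₂₂, ?_⟩
  nth_rw 1 [← fromBlocks_toBlocks W]
  rw [h₁₁, h₁₂, h₂₁]

theorem exists_eq_mul_fromBlocks_conjTranspose [Fintype n] [DecidableEq n] [Fintype κ₁]
    [DecidableEq κ₁] [Fintype κ₂] [DecidableEq κ₂] {X Z : Matrix n (κ₁ ⊕ κ₂) 𝕜}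
    (hX : Xᴴ * X = 1) (hZ : Zᴴ * Z = 1) (hZ' : Z * Zᴴ = 1) {V₁ : Matrix κ₁ κ₁ 𝕜}
    (hV₁ : V₁ ∈ unitaryGroup κ₁ 𝕜) (hcol : X.toCols₁ * V₁ = Z.toCols₁) :
    ∃ V₂ ∈ unitaryGroup κ₂ 𝕜, X = Z * (fromBlocks V₁ 0 0 V₂)ᴴ := by
  set D := fromBlocks V₁ 0 0 (1 : Matrix κ₂ κ₂ 𝕜)
  have hD : D ∈ unitaryGroup (κ₁ ⊕ κ₂) 𝕜 := fromBlocks_mem_unitaryGroup hV₁ (one_mem _)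
  have hXD : (X * D).toCols₁ = Z.toCols₁ := by
    rw [← hcol, ← fromCols_toCols X, fromCols_mul_fromBlocks]
    simp
  -- `W` is unitary and its first block of columns is that of `1`.
  set W := Zᴴ * (X * D)
  have hW : W ∈ unitaryGroup (κ₁ ⊕ κ₂) 𝕜 := by
    rw [mem_unitaryGroup_iff', star_eq_conjTranspose]
    calc Wᴴ * W = Dᴴ * (Xᴴ * (Z * Zᴴ) * X) * D := by
          simp only [W, conjTranspose_mul, conjTranspose_conjTranspose, Matrix.mul_assoc]
      _ = 1 := by
          rw [hZ', Matrix.mul_one, hX, Matrix.mul_one, ← star_eq_conjTranspose,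
            Unitary.star_mul_self_of_mem hD]
  obtain ⟨V, hV, hWV⟩ := exists_eq_fromBlocks_one_of_toCols₁_eq hW (by
    rw [mul_toCols₁, hXD, ← mul_toCols₁, hZ])
  refine ⟨Vᴴ, Unitary.star_mem hV, ?_⟩
  calc X = X * D * Dᴴ := by
        rw [Matrix.mul_assoc, ← star_eq_conjTranspose, Unitary.mul_star_self_of_mem hD,
          Matrix.mul_one]
    _ = Z * W * Dᴴ := by rw [← Matrix.mul_assoc Z, hZ', Matrix.one_mul]
    _ = Z * (fromBlocks V₁ 0 0 Vᴴ)ᴴ := by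
        rw [hWV, Matrix.mul_assoc]
        simp [D, fromBlocks_conjTranspose, fromBlocks_multiply]

/-- The first columns `[C; 0; -S; 0]` of `Σ`; `f₁` and `f₂` place the rows of `C` and `-S`. -/
noncomputable def csdColumns (𝕜 : Type*) [RCLike 𝕜] [Fintype κ] [DecidableEq κ] [DecidableEq ι₁]
    [DecidableEq ι₂] (f₁ : κ ↪ ι₁) (f₂ : κ ↪ ι₂) (θ : κ → ℝ) : Matrix (ι₁ ⊕ ι₂) κ 𝕜 :=
  fromRows ((1 : Matrix ι₁ ι₁ 𝕜).submatrix id f₁ * diagonal fun i => (Real.cos (θ i) : 𝕜))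
    (-((1 : Matrix ι₂ ι₂ 𝕜).submatrix id f₂ * diagonal fun i => (Real.sin (θ i) : 𝕜)))

theorem csdColumns_map_ofReal [Fintype κ] [DecidableEq κ] [DecidableEq ι₁] [DecidableEq ι₂]
    (f₁ : κ ↪ ι₁) (f₂ : κ ↪ ι₂) (θ : κ → ℝ) :
    (csdColumns ℝ f₁ f₂ θ).map Complex.ofReal = csdColumns ℂ f₁ f₂ θ := by
  ext (i | i) j <;> simp [csdColumns, mul_diagonal, one_apply, apply_ite Complex.ofReal]

theorem exists_unitary_conjTranspose_mul_self_eq_diagonal [Fintype κ] [DecidableEq κ]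
    [Fintype ι₁] [Fintype ι₂] {A : Matrix ι₁ κ 𝕜} {B : Matrix ι₂ κ 𝕜}
    (hAB : Aᴴ * A + Bᴴ * B = 1) :
    ∃ V ∈ unitaryGroup κ 𝕜, ∃ d : κ → ℝ, (∀ i, d i ∈ Set.Icc 0 1) ∧
      (A * V)ᴴ * (A * V) = diagonal (fun i => (d i : 𝕜)) ∧
      (B * V)ᴴ * (B * V) = diagonal (fun i => ((1 - d i : ℝ) : 𝕜)) := by
  have hG := isHermitian_conjTranspose_mul_self A
  set V : Matrix κ κ 𝕜 := (hG.eigenvectorUnitary : Matrix κ κ 𝕜)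
  have hV : V ∈ unitaryGroup κ 𝕜 := hG.eigenvectorUnitary.2
  have hdiag : Vᴴ * (Aᴴ * A) * V = diagonal fun i => (hG.eigenvalues i : 𝕜) := by
    have := hG.conjStarAlgAut_star_eigenvectorUnitary
    rwa [Unitary.conjStarAlgAut_star_apply, star_eq_conjTranspose] at this
  have hBV : (B * V)ᴴ * (B * V) = diagonal fun i => ((1 - hG.eigenvalues i : ℝ) : 𝕜) := by
    calc (B * V)ᴴ * (B * V) = Vᴴ * (Bᴴ * B) * V := by
          rw [conjTranspose_mul]
          simp only [Matrix.mul_assoc]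
      _ = Vᴴ * V - Vᴴ * (Aᴴ * A) * V := by
          rw [eq_sub_of_add_eq' hAB, Matrix.mul_sub, Matrix.sub_mul, Matrix.mul_one]
      _ = diagonal fun i => ((1 - hG.eigenvalues i : ℝ) : 𝕜) := by
          rw [hdiag, ← star_eq_conjTranspose, Unitary.star_mul_self_of_mem hV, ← diagonal_one,
            diagonal_sub]
          push_cast
          rfl
  refine ⟨V, hV, hG.eigenvalues, fun i => ⟨eigenvalues_conjTranspose_mul_self_nonneg A i, ?_⟩,
    by rw [conjTranspose_mul, ← hdiag]; simp only [Matrix.mul_assoc], hBV⟩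
  have := posSemidef_diagonal_iff.mp (hBV ▸ posSemidef_conjTranspose_mul_self (B * V)) i
  simpa using RCLike.ofReal_nonneg.mp this

theorem exists_mul_eq_fromBlocks_mul_csdColumns [Fintype κ] [DecidableEq κ] [Fintype ι₁]
    [DecidableEq ι₁] [Fintype ι₂] [DecidableEq ι₂] {M : Matrix (ι₁ ⊕ ι₂) κ 𝕜} (hM : Mᴴ * M = 1)
    (f₁ : κ ↪ ι₁) (f₂ : κ ↪ ι₂) :
    ∃ V ∈ unitaryGroup κ 𝕜, ∃ θ : κ → ℝ, (∀ i, θ i ∈ Set.Icc 0 (Real.pi / 2)) ∧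
      ∃ U₁ ∈ unitaryGroup ι₁ 𝕜, ∃ U₂ ∈ unitaryGroup ι₂ 𝕜,
        M * V = fromBlocks U₁ 0 0 U₂ * csdColumns 𝕜 f₁ f₂ θ := by
  obtain ⟨V, hV, d, hd, hAV, hBV⟩ := exists_unitary_conjTranspose_mul_self_eq_diagonal
    (A := M.toRows₁) (B := M.toRows₂) (by
      rw [← fromCols_mul_fromRows, ← conjTranspose_fromRows_eq_fromCols_conjTranspose,
        fromRows_toRows, hM])
  obtain ⟨U₁, hU₁, hU₁AV⟩ := exists_unitary_submatrix_mul_diagonal_sqrt f₁ _ _ hAV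
  obtain ⟨U₂, hU₂, hU₂BV⟩ := exists_unitary_submatrix_mul_diagonal_sqrt f₂ (-(M.toRows₂ * V)) _
    (by rwa [conjTranspose_neg, Matrix.neg_mul, Matrix.mul_neg, neg_neg])
  refine ⟨V, hV, fun i => Real.arccos √(d i),
    fun i => ⟨Real.arccos_nonneg _, Real.arccos_le_pi_div_two.mpr (Real.sqrt_nonneg _)⟩,
    U₁, hU₁, U₂, hU₂, ?_⟩
  have hcos (i : κ) : Real.cos (Real.arccos √(d i)) = √(d i) :=
    Real.cos_arccos (by linarith [Real.sqrt_nonneg (d i)]) (Real.sqrt_le_one.mpr (hd i).2)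
  have hsin (i : κ) : Real.sin (Real.arccos √(d i)) = √(1 - d i) := by
    rw [Real.sin_arccos, Real.sq_sqrt (hd i).1]
  rw [← fromRows_toRows M, fromRows_mul, csdColumns, fromBlocks_mul_fromRows]
  simp only [Matrix.zero_mul, Matrix.mul_neg, neg_zero, add_zero, zero_add]
  simp only [hcos, hsin, ← Matrix.mul_assoc, mul_submatrix_id_one, ← hU₁AV, ← hU₂BV, neg_neg]

end Matrix

theorem Fin.sum_ite_val_eq {R : Type*} [AddCommMonoid R] {m : ℕ} (a : ℕ) (f : Fin m → R) :
    ∑ j : Fin m, (if (j : ℕ) = a then f j else 0) = if h : a < m then f ⟨a, h⟩ else 0 := by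
  split_ifs with h
  · rw [Finset.sum_eq_single ⟨a, h⟩] <;> simp +contextual [Fin.ext_iff]
  · exact Finset.sum_eq_zero fun j _ => if_neg (by omega)

theorem csdSigma_mem_orthogonalGroup {m p q : ℕ} (hqp : q ≤ p) (hpqm : p + q ≤ m)
    (θ : Fin q → ℝ) : csdSigma m p q θ ∈ orthogonalGroup (Fin m) ℝ := by
  rw [mem_orthogonalGroup_iff]
  ext i k
  simp only [mul_apply, transpose_apply, csdSigma, one_apply, Fin.ext_iff]
  split_ifs <;>
  simp only [add_mul, mul_add, ite_mul, mul_ite, zero_mul, mul_zero, Finset.sum_add_distrib,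
    Fin.sum_ite_val_eq] <;>
  grind [Real.sin_sq_add_cos_sq]

def finSumFinSubEquiv {m k : ℕ} (h : k ≤ m) : Fin k ⊕ Fin (m - k) ≃ Fin m :=
  finSumFinEquiv.trans (finCongr (Nat.add_sub_cancel' h))

@[simp] theorem finSumFinSubEquiv_inl_val {m k : ℕ} (h : k ≤ m) (i : Fin k) :
    (finSumFinSubEquiv h (.inl i) : ℕ) = i :=
  rfl

@[simp] theorem finSumFinSubEquiv_inr_val {m k : ℕ} (h : k ≤ m) (i : Fin (m - k)) :
    (finSumFinSubEquiv h (.inr i) : ℕ) = k + i :=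
  rfl

theorem toCols₁_submatrix_csdSigma {m p q : ℕ} (hqp : q ≤ p) (hpqm : p + q ≤ m) (θ : Fin q → ℝ) :
    ((csdSigma m p q θ).submatrix (finSumFinSubEquiv (Nat.le_of_add_right_le hpqm))
      (finSumFinSubEquiv (hqp.trans (Nat.le_of_add_right_le hpqm)))).toCols₁ =
      csdColumns ℝ (Fin.castLEEmb hqp) (Fin.castLEEmb (Nat.le_sub_of_add_le' hpqm)) θ := by
  ext (⟨i, hi⟩ | ⟨i, hi⟩) ⟨j, hj⟩ <;>
  simp only [csdColumns, csdSigma, toCols₁_apply, submatrix_apply, fromRows_apply_inl,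
    fromRows_apply_inr, mul_diagonal, Matrix.neg_apply, one_apply, Fin.ext_iff,
    finSumFinSubEquiv_inl_val, finSumFinSubEquiv_inr_val, Fin.castLEEmb_apply, Fin.val_castLE,
    id_eq, Fin.val_mk, ite_mul, one_mul, zero_mul, RCLike.ofReal_real_eq_id] <;>
  grind

theorem blockDiagC_eq_submatrix {m k : ℕ} (h : k ≤ m) (A : Matrix (Fin k) (Fin k) ℂ)
    (B : Matrix (Fin (m - k)) (Fin (m - k)) ℂ) :
    blockDiagC m k h A B =
      (fromBlocks A 0 0 B).submatrix (finSumFinSubEquiv h).symm (finSumFinSubEquiv h).symm :=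
  rfl

theorem blockDiagC_mem_unitaryGroup {m k : ℕ} (h : k ≤ m) {A : Matrix (Fin k) (Fin k) ℂ}
    {B : Matrix (Fin (m - k)) (Fin (m - k)) ℂ} (hA : A ∈ unitaryGroup (Fin k) ℂ)
    (hB : B ∈ unitaryGroup (Fin (m - k)) ℂ) : blockDiagC m k h A B ∈ unitaryGroup (Fin m) ℂ := by
  rw [mem_unitaryGroup_iff', star_eq_conjTranspose, blockDiagC_eq_submatrix]
  exact conjTranspose_submatrix_mul_self (fromBlocks_mem_unitaryGroup hA hB) _ _

theorem toCols₁_submatrix_blockDiagC_mul_csdSigma {m p q : ℕ} (hqp : q ≤ p) (hpqm : p + q ≤ m)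
    (θ : Fin q → ℝ) (U₁ : Matrix (Fin p) (Fin p) ℂ) (U₂ : Matrix (Fin (m - p)) (Fin (m - p)) ℂ) :
    ((blockDiagC m p (Nat.le_of_add_right_le hpqm) U₁ U₂ *
        (csdSigma m p q θ).map Complex.ofReal).submatrix
      (finSumFinSubEquiv (Nat.le_of_add_right_le hpqm))
      (finSumFinSubEquiv (hqp.trans (Nat.le_of_add_right_le hpqm)))).toCols₁ =
      fromBlocks U₁ 0 0 U₂ *
        csdColumns ℂ (Fin.castLEEmb hqp) (Fin.castLEEmb (Nat.le_sub_of_add_le' hpqm)) θ := by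
  rw [← submatrix_mul_equiv _ _ _ (finSumFinSubEquiv _), blockDiagC_eq_submatrix,
    submatrix_submatrix, Equiv.symm_comp_self, submatrix_id_id, mul_toCols₁,
    ← csdColumns_map_ofReal, ← toCols₁_submatrix_csdSigma hqp hpqm]
  rfl

/-- The complete CS decomposition of a partitioned unitary matrix. -/
theorem complete_csd (m p q : ℕ) (hqp : q ≤ p) (hpqm : p + q ≤ m)
    (X : Matrix (Fin m) (Fin m) ℂ) (hX : X ∈ Matrix.unitaryGroup (Fin m) ℂ) :
    ∃ (U₁ : Matrix (Fin p) (Fin p) ℂ) (U₂ : Matrix (Fin (m - p)) (Fin (m - p)) ℂ)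
      (V₁ : Matrix (Fin q) (Fin q) ℂ) (V₂ : Matrix (Fin (m - q)) (Fin (m - q)) ℂ)
      (θ : Fin q → ℝ),
      U₁ ∈ Matrix.unitaryGroup (Fin p) ℂ ∧
      U₂ ∈ Matrix.unitaryGroup (Fin (m - p)) ℂ ∧
      V₁ ∈ Matrix.unitaryGroup (Fin q) ℂ ∧
      V₂ ∈ Matrix.unitaryGroup (Fin (m - q)) ℂ ∧
      (∀ i, θ i ∈ Set.Icc 0 (Real.pi / 2)) ∧
      X = blockDiagC m p (by omega) U₁ U₂ *
            (csdSigma m p q θ).map Complex.ofReal *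
            (blockDiagC m q (by omega) V₁ V₂)ᴴ := by
  set eP := finSumFinSubEquiv (by omega : p ≤ m)
  set eQ := finSumFinSubEquiv (by omega : q ≤ m)
  have hY := conjTranspose_submatrix_mul_self hX eP eQ
  obtain ⟨V₁, hV₁, θ, hθ, U₁, hU₁, U₂, hU₂, hXV₁⟩ :=
    exists_mul_eq_fromBlocks_mul_csdColumns (conjTranspose_toCols₁_mul_toCols₁ hY)
      (Fin.castLEEmb hqp) (Fin.castLEEmb (by omega : q ≤ m - p))
  set W := blockDiagC m p (by omega) U₁ U₂ * (csdSigma m p q θ).map Complex.ofReal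
  have hW : W ∈ unitaryGroup (Fin m) ℂ := mul_mem (blockDiagC_mem_unitaryGroup _ hU₁ hU₂)
    (map_ofReal_mem_unitaryGroup (csdSigma_mem_orthogonalGroup hqp hpqm θ))
  obtain ⟨V₂, hV₂, hXW⟩ := exists_eq_mul_fromBlocks_conjTranspose hY
    (conjTranspose_submatrix_mul_self hW eP eQ) (submatrix_mul_conjTranspose_self hW eP eQ) hV₁
    (hXV₁.trans (toCols₁_submatrix_blockDiagC_mul_csdSigma hqp hpqm θ U₁ U₂).symm)
  refine ⟨U₁, U₂, V₁, V₂, θ, hU₁, hU₂, hV₁, hV₂, hθ, ?_⟩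
  have hWe : W = (W.submatrix eP eQ).submatrix eP.symm eQ.symm := by simp
  change X = W * _
  rw [blockDiagC_eq_submatrix, conjTranspose_submatrix, hWe, submatrix_mul_equiv, ← hXW]
  simp [eQ]
end

section
/- For every θ = (θ₁, …, θ_q) ∈ [0, π/2]^q and φ = (φ₁, …, φ_{q−1}) ∈ [0, π/2]^{q−1}, the 2q-by-2q real matrix [[B₁₁(θ,φ), B₁₂(θ,φ)], [B₂₁(θ,φ), B₂₂(θ,φ)]] in bidiagonal block form is orthogonal. -/
open Matrix

/-- `B₁₁(θ,φ)`: upper bidiagonal, `(i,i)` entry `cos θᵢ · cos φᵢ₋₁` (with the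
convention `cos φ₀ = 1`, 1-based indexing), `(i,i+1)` entry `−sin θᵢ · sin φᵢ`. -/
noncomputable def bdbB11 (q : ℕ) (θ : Fin q → ℝ) (φ : Fin (q - 1) → ℝ) :
    Matrix (Fin q) (Fin q) ℝ :=
  fun i j =>
    if j.val = i.val then
      Real.cos (θ i) *
        (if h : 0 < i.val then Real.cos (φ ⟨i.val - 1, by have := i.isLt; omega⟩) else 1)
    else if h : j.val = i.val + 1 then
      -(Real.sin (θ i) * Real.sin (φ ⟨i.val, by have := j.isLt; omega⟩))
    else 0

/-- `B₁₂(θ,φ)`: lower bidiagonal, `(i,i)` entry `sin θᵢ · cos φᵢ` for `i < q`,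
`(q,q)` entry `sin θ_q`, and `(i+1,i)` entry `cos θᵢ₊₁ · sin φᵢ` (1-based indexing). -/
noncomputable def bdbB12 (q : ℕ) (θ : Fin q → ℝ) (φ : Fin (q - 1) → ℝ) :
    Matrix (Fin q) (Fin q) ℝ :=
  fun i j =>
    if j.val = i.val then
      Real.sin (θ i) * (if h : i.val < q - 1 then Real.cos (φ ⟨i.val, h⟩) else 1)
    else if h : i.val = j.val + 1 then
      Real.cos (θ i) * Real.sin (φ ⟨j.val, by have := i.isLt; omega⟩)
    else 0

/-- `B₂₁(θ,φ)`: upper bidiagonal, `(i,i)` entry `−sin θᵢ · cos φᵢ₋₁` (with the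
convention `cos φ₀ = 1`), `(i,i+1)` entry `−cos θᵢ · sin φᵢ` (1-based indexing). -/
noncomputable def bdbB21 (q : ℕ) (θ : Fin q → ℝ) (φ : Fin (q - 1) → ℝ) :
    Matrix (Fin q) (Fin q) ℝ :=
  fun i j =>
    if j.val = i.val then
      -(Real.sin (θ i) *
        (if h : 0 < i.val then Real.cos (φ ⟨i.val - 1, by have := i.isLt; omega⟩) else 1))
    else if h : j.val = i.val + 1 then
      -(Real.cos (θ i) * Real.sin (φ ⟨i.val, by have := j.isLt; omega⟩))
    else 0

/-- `B₂₂(θ,φ)`: lower bidiagonal, `(i,i)` entry `cos θᵢ · cos φᵢ` for `i < q`,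
`(q,q)` entry `cos θ_q`, and `(i+1,i)` entry `−sin θᵢ₊₁ · sin φᵢ` (1-based indexing). -/
noncomputable def bdbB22 (q : ℕ) (θ : Fin q → ℝ) (φ : Fin (q - 1) → ℝ) :
    Matrix (Fin q) (Fin q) ℝ :=
  fun i j =>
    if j.val = i.val then
      Real.cos (θ i) * (if h : i.val < q - 1 then Real.cos (φ ⟨i.val, h⟩) else 1)
    else if h : i.val = j.val + 1 then
      -(Real.sin (θ i) * Real.sin (φ ⟨j.val, by have := i.isLt; omega⟩))
    else 0

/-!
Row `i` of either half of `bdbMatrix q θ φ` is obtained by rotating rows `i` of the two halves of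
`bdbMatrix q 0 φ` through the angle `θᵢ`, so `bdbMatrix q θ φ = rotationBlocks θ * bdbMatrix q 0 φ`,
where `rotationBlocks θ` is the direct sum of the plane rotations through `θᵢ` in the coordinate
planes `(i, q + i)`. The second factor is of the same kind after relabelling coordinates: it
rotates the plane of the top coordinate `i + 1` and the bottom coordinate `i` through `φᵢ` and fixes
the first top and the last bottom coordinate, so a cyclic shift of the top coordinates turns it
into `rotationBlocks (φ₁, …, φ_{q-1}, 0)`. Products and relabellings of orthogonal matrices are
orthogonal.
-/

theorem submatrix_equiv_mem_orthogonalGroup {m n R : Type*} [Fintype m] [Fintype n]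
    [DecidableEq m] [DecidableEq n] [CommRing R] {A : Matrix n n R}
    (hA : A ∈ orthogonalGroup n R) (e : m ≃ n) : A.submatrix e e ∈ orthogonalGroup m R := by
  rw [mem_orthogonalGroup_iff'] at hA ⊢
  rw [transpose_submatrix, submatrix_mul_equiv, hA, submatrix_one_equiv]

section RotationBlocks

variable {n : Type*} [Fintype n] [DecidableEq n]

theorem fromBlocks_neg_mem_orthogonalGroup {R : Type*} [CommRing R] {C S : Matrix n n R}
    (hC : Cᵀ = C) (hS : Sᵀ = S) (hCS : Commute C S) (hpyth : C * C + S * S = 1) :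
    fromBlocks C S (-S) C ∈ orthogonalGroup (n ⊕ n) R := by
  rw [mem_orthogonalGroup_iff', fromBlocks_transpose, fromBlocks_multiply, ← fromBlocks_one]
  simp only [hC, hS, transpose_neg, neg_mul, mul_neg, neg_neg, hCS.eq, add_neg_cancel,
    add_comm (S * S), hpyth]

noncomputable def rotationBlocks (α : n → ℝ) : Matrix (n ⊕ n) (n ⊕ n) ℝ :=
  fromBlocks (diagonal (Real.cos ∘ α)) (diagonal (Real.sin ∘ α))
    (-diagonal (Real.sin ∘ α)) (diagonal (Real.cos ∘ α))

theorem rotationBlocks_mem_orthogonalGroup (α : n → ℝ) :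
    rotationBlocks α ∈ orthogonalGroup (n ⊕ n) ℝ := by
  refine fromBlocks_neg_mem_orthogonalGroup (diagonal_transpose _) (diagonal_transpose _)
    (commute_diagonal _ _) ?_
  rw [diagonal_mul_diagonal, diagonal_mul_diagonal, diagonal_add, ← diagonal_one]
  congr 1
  funext i
  simpa [sq] using Real.cos_sq_add_sin_sq (α i)

end RotationBlocks

theorem val_finRotate {q : ℕ} (i : Fin q) :
    (finRotate q i : ℕ) = if (i : ℕ) + 1 = q then 0 else (i : ℕ) + 1 := by
  cases q with
  | zero => exact i.elim0
  | succ n => simp [Fin.val_add_one, Fin.ext_iff]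

noncomputable def paddedAngles (q : ℕ) (φ : Fin (q - 1) → ℝ) : Fin q → ℝ :=
  fun i => if h : (i : ℕ) < q - 1 then φ ⟨i, h⟩ else 0

theorem cos_paddedAngles {q : ℕ} (φ : Fin (q - 1) → ℝ) (i : Fin q) :
    Real.cos (paddedAngles q φ i) =
      if h : (i : ℕ) < q - 1 then Real.cos (φ ⟨i, h⟩) else 1 := by
  simp only [paddedAngles, apply_dite Real.cos, Real.cos_zero]

theorem cos_paddedAngles_finRotate_symm {q : ℕ} (φ : Fin (q - 1) → ℝ) (i : Fin q) :
    Real.cos (paddedAngles q φ ((finRotate q).symm i)) =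
      if h : 0 < (i : ℕ) then Real.cos (φ ⟨i - 1, by have := i.isLt; omega⟩) else 1 := by
  obtain ⟨j, rfl⟩ := (finRotate q).surjective i
  have hj := val_finRotate j
  have := j.isLt
  simp only [Equiv.symm_apply_apply, paddedAngles]
  split_ifs at hj <;> split_ifs <;>
    first | (exfalso; omega) | exact Real.cos_zero | (congr 3; omega)

theorem ite_finRotate_sin_paddedAngles {q : ℕ} (φ : Fin (q - 1) → ℝ) (i j : Fin q) :
    (if finRotate q i = j then Real.sin (paddedAngles q φ i) else 0) =
      if h : (j : ℕ) = i + 1 then Real.sin (φ ⟨i, by have := j.isLt; omega⟩) else 0 := by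
  have hi := val_finRotate i
  have := j.isLt
  simp only [paddedAngles, Fin.ext_iff]
  split_ifs at hi <;> split_ifs <;>
    first | (exfalso; omega) | rfl | exact Real.sin_zero

theorem ite_finRotate_symm_sin_paddedAngles {q : ℕ} (φ : Fin (q - 1) → ℝ) (i j : Fin q) :
    (if (finRotate q).symm i = j then Real.sin (paddedAngles q φ ((finRotate q).symm i))
      else 0) =
      if h : (i : ℕ) = j + 1 then Real.sin (φ ⟨j, by have := i.isLt; omega⟩) else 0 := by
  obtain ⟨k, rfl⟩ := (finRotate q).surjective i
  rw [← ite_finRotate_sin_paddedAngles]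
  simp only [Equiv.symm_apply_apply, EmbeddingLike.apply_eq_iff_eq]
  rcases eq_or_ne k j with rfl | hkj
  · rfl
  · rw [if_neg hkj, if_neg hkj.symm]

noncomputable def bdbMatrix (q : ℕ) (θ : Fin q → ℝ) (φ : Fin (q - 1) → ℝ) :
    Matrix (Fin q ⊕ Fin q) (Fin q ⊕ Fin q) ℝ :=
  fromBlocks (bdbB11 q θ φ) (bdbB12 q θ φ) (bdbB21 q θ φ) (bdbB22 q θ φ)

theorem bdbMatrix_eq_rotationBlocks_mul (q : ℕ) (θ : Fin q → ℝ) (φ : Fin (q - 1) → ℝ) :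
    bdbMatrix q θ φ = rotationBlocks θ * bdbMatrix q 0 φ := by
  rw [rotationBlocks, bdbMatrix, bdbMatrix, fromBlocks_multiply]
  congr 1 <;> ext i j <;>
    simp only [Matrix.add_apply, Matrix.neg_apply, neg_mul, diagonal_mul, Function.comp_apply,
      bdbB11, bdbB12, bdbB21, bdbB22, Pi.zero_apply, Real.cos_zero, Real.sin_zero] <;>
    split_ifs <;> ring

theorem bdbMatrix_zero_eq_submatrix (q : ℕ) (φ : Fin (q - 1) → ℝ) :
    bdbMatrix q 0 φ = (rotationBlocks (paddedAngles q φ)).submatrix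
      (Equiv.sumCongr (finRotate q).symm (Equiv.refl _))
      (Equiv.sumCongr (finRotate q).symm (Equiv.refl _)) := by
  ext (i | i) (j | j) <;>
    simp only [bdbMatrix, rotationBlocks, submatrix_apply, Equiv.sumCongr_apply, Sum.map_inl,
      Sum.map_inr, Equiv.coe_refl, id, fromBlocks_apply₁₁, fromBlocks_apply₁₂,
      fromBlocks_apply₂₁, fromBlocks_apply₂₂, Matrix.neg_apply, diagonal_apply,
      Function.comp_apply, bdbB11, bdbB12, bdbB21, bdbB22, Pi.zero_apply, Real.cos_zero,
      Real.sin_zero, zero_mul, one_mul, neg_zero, dite_eq_ite, ite_self]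
  on_goal 1 =>
    simp only [Equiv.apply_eq_iff_eq, cos_paddedAngles_finRotate_symm, Fin.ext_iff]
  on_goal 2 => simp only [ite_finRotate_symm_sin_paddedAngles]
  on_goal 3 =>
    simp only [Equiv.eq_symm_apply, ite_finRotate_sin_paddedAngles]
  on_goal 4 => simp only [cos_paddedAngles, Fin.ext_iff]
  all_goals split_ifs <;> first | rfl | exact neg_zero.symm | (exfalso; omega)

theorem bdb_orthogonal_general (q : ℕ) (θ : Fin q → ℝ) (φ : Fin (q - 1) → ℝ) :
    Matrix.fromBlocks (bdbB11 q θ φ) (bdbB12 q θ φ) (bdbB21 q θ φ) (bdbB22 q θ φ)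
      ∈ Matrix.orthogonalGroup (Fin q ⊕ Fin q) ℝ := by
  change bdbMatrix q θ φ ∈ _
  rw [bdbMatrix_eq_rotationBlocks_mul, bdbMatrix_zero_eq_submatrix]
  exact mul_mem (rotationBlocks_mem_orthogonalGroup θ)
    (submatrix_equiv_mem_orthogonalGroup (rotationBlocks_mem_orthogonalGroup _) _)

/-- Any matrix in bidiagonal block form is orthogonal. -/
theorem bdb_orthogonal (q : ℕ) (θ : Fin q → ℝ) (φ : Fin (q - 1) → ℝ)
    (hθ : ∀ i, θ i ∈ Set.Icc 0 (Real.pi / 2))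
    (hφ : ∀ i, φ i ∈ Set.Icc 0 (Real.pi / 2)) :
    Matrix.fromBlocks (bdbB11 q θ φ) (bdbB12 q θ φ) (bdbB21 q θ φ) (bdbB22 q θ φ)
      ∈ Matrix.orthogonalGroup (Fin q ⊕ Fin q) ℝ :=
  bdb_orthogonal_general q θ φ
end

section
/- Let q ≥ 1 and let B₁₁, B₁₂, B₂₁, B₂₂ be q-by-q real matrices such that the 2q-by-2q matrix [[B₁₁, B₁₂], [B₂₁, B₂₂]] is orthogonal, and suppose the blocks have the following zero/sign pattern: B₁₁ is upper bidiagonal with nonnegative diagonal entries and nonpositive superdiagonal entries; B₁₂ is lower bidiagonal with nonnegative diagonal and subdiagonal entries; B₂₁ is upper bidiagonal with nonpositive diagonal and superdiagonal entries; B₂₂ is lower bidiagonal with nonnegative diagonal entries and nonpositive subdiagonal entries. Then there exist θ = (θ₁, …, θ_q) ∈ [0, π/2]^q and φ = (φ₁, …, φ_{q−1}) ∈ [0, π/2]^{q−1} such that B_{ij} = B_{ij}(θ,φ) for i, j = 1, 2. -/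
open Matrix

/-!
Row `n` of the top half and row `n` of the bottom half have their nonzero entries in columns `n`,
`n + 1` of the left half and `n - 1`, `n` of the right half. Read off `sin θₙ` as the length of
`(B₂₁ n n, B₂₂ n (n - 1))` and `sin φₙ` as the length of `(B₁₁ n (n + 1), B₂₁ n (n + 1))`, and go
down the rows. Once the entries of the two rows `n` that involve `θₙ, φₙ₋₁` are known to have the
claimed form, orthonormality of these rows says that the `2 × 2` block `U` of their remaining
entries satisfies `U Uᵀ = p pᵀ` with `p = (sin θₙ, cos θₙ)`. So both columns of `U` are multiples
of `p`, and the sign pattern forces the multiples to be `-sin φₙ` and `cos φₙ`. Orthonormality of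
column `n + 1` of the left half and column `n` of the right half then determines the entries of
the rows `n + 1` in the same way, with `p = (cos φₙ, sin φₙ)`.
-/

namespace Matrix

section Orthogonal

variable {m n R : Type*} [Fintype m] [Fintype n] [DecidableEq m] [DecidableEq n] [CommRing R]
  {A : Matrix m m R} {B : Matrix m n R} {C : Matrix n m R} {D : Matrix n n R}

theorem fromBlocks_mem_orthogonalGroup_iff :
    fromBlocks A B C D ∈ orthogonalGroup (m ⊕ n) R ↔
      A * Aᵀ + B * Bᵀ = 1 ∧ A * Cᵀ + B * Dᵀ = 0 ∧ C * Cᵀ + D * Dᵀ = 1 := by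
  rw [mem_orthogonalGroup_iff, fromBlocks_transpose, fromBlocks_multiply, ← fromBlocks_one,
    fromBlocks_inj]
  have : C * Aᵀ + D * Bᵀ = (A * Cᵀ + B * Dᵀ)ᵀ := by simp [transpose_mul]
  rw [this, transpose_eq_zero]
  tauto

theorem fromBlocks_mem_orthogonalGroup_iff' :
    fromBlocks A B C D ∈ orthogonalGroup (m ⊕ n) R ↔
      Aᵀ * A + Cᵀ * C = 1 ∧ Aᵀ * B + Cᵀ * D = 0 ∧ Bᵀ * B + Dᵀ * D = 1 := by
  rw [mem_orthogonalGroup_iff', fromBlocks_transpose, fromBlocks_multiply, ← fromBlocks_one,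
    fromBlocks_inj]
  have : Bᵀ * A + Dᵀ * C = (Aᵀ * B + Cᵀ * D)ᵀ := by simp [transpose_mul]
  rw [this, transpose_eq_zero]
  tauto

end Orthogonal

end Matrix

theorem Fin.sum_intCast_eq_add {q : ℕ} {M : Type*} [AddCommMonoid M] {F : ℤ → M} (m : ℤ)
    (hF : ∀ k, k ≠ m → k ≠ m + 1 → F k = 0) (hout : ∀ k : ℤ, k < 0 ∨ q ≤ k → F k = 0) :
    ∑ k : Fin q, F k = F m + F (m + 1) := by
  let e : Fin q ↪ ℤ := Fin.valEmbedding.trans Nat.castEmbedding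
  have hmem : ∀ k, k ∉ Finset.univ.map e → F k = 0 := fun k hk => hout k <| by
    by_contra h
    exact hk (Finset.mem_map.2 ⟨⟨k.toNat, by omega⟩, Finset.mem_univ _, by simp [e]; omega⟩)
  change ∑ k, F (e k) = _
  rw [← Finset.sum_map Finset.univ e F]
  exact Finset.sum_eq_add _ _ (by omega) (fun k _ hk => hF k hk.1 hk.2) (hmem m) (hmem _)

namespace Matrix

variable {R : Type*} {q : ℕ}

/-- The entries of `B` indexed by integers and extended by `0` outside `[0, q)`, so that the first
and last rows and columns of a bidiagonal matrix need no separate treatment. -/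
def intEntry [Zero R] (B : Matrix (Fin q) (Fin q) R) (i j : ℤ) : R :=
  if h : 0 ≤ i ∧ i < q ∧ 0 ≤ j ∧ j < q then B ⟨i.toNat, by omega⟩ ⟨j.toNat, by omega⟩ else 0

def IsUpperBidiagonal [Zero R] (B : Matrix (Fin q) (Fin q) R) : Prop :=
  ∀ i j : Fin q, ¬(j.val = i.val ∨ j.val = i.val + 1) → B i j = 0

def IsLowerBidiagonal [Zero R] (B : Matrix (Fin q) (Fin q) R) : Prop :=
  ∀ i j : Fin q, ¬(j.val = i.val ∨ i.val = j.val + 1) → B i j = 0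

section Zero

variable [Zero R] {B : Matrix (Fin q) (Fin q) R} {i j : ℤ}

@[simp] theorem intEntry_natCast (B : Matrix (Fin q) (Fin q) R) (i j : Fin q) :
    B.intEntry i j = B i j := by
  simp [intEntry]

theorem intEntry_of_not_mem (h : ¬(0 ≤ i ∧ i < q ∧ 0 ≤ j ∧ j < q)) : B.intEntry i j = 0 :=
  dif_neg h

theorem intEntry_induction {p : R → Prop} (h₀ : p 0)
    (hB : ∀ i' j' : Fin q, (i' : ℤ) = i → (j' : ℤ) = j → p (B i' j')) : p (B.intEntry i j) := by
  unfold intEntry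
  split_ifs with h
  · exact hB _ _ (by simp; omega) (by simp; omega)
  · exact h₀

@[simp] theorem intEntry_zero : (0 : Matrix (Fin q) (Fin q) R).intEntry i j = 0 :=
  intEntry_induction (p := (· = 0)) rfl fun _ _ _ _ => rfl

theorem intEntry_one_self [One R] (h₀ : 0 ≤ i) (h : i < q) :
    (1 : Matrix (Fin q) (Fin q) R).intEntry i i = 1 := by
  simp [intEntry, h₀, h]

theorem intEntry_transpose : Bᵀ.intEntry i j = B.intEntry j i := by
  unfold intEntry
  split_ifs <;> first | rfl | omega

theorem IsUpperBidiagonal.transpose (hB : B.IsUpperBidiagonal) : Bᵀ.IsLowerBidiagonal :=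
  fun i j h => hB j i (by omega)

theorem IsLowerBidiagonal.transpose (hB : B.IsLowerBidiagonal) : Bᵀ.IsUpperBidiagonal :=
  fun i j h => hB j i (by omega)

theorem IsUpperBidiagonal.intEntry_eq_zero (hB : B.IsUpperBidiagonal) (h₁ : j ≠ i)
    (h₂ : j ≠ i + 1) : B.intEntry i j = 0 :=
  intEntry_induction (p := (· = 0)) rfl fun i' j' hi hj => hB i' j' (by omega)

theorem IsLowerBidiagonal.intEntry_eq_zero (hB : B.IsLowerBidiagonal) (h₁ : j ≠ i)
    (h₂ : i ≠ j + 1) : B.intEntry i j = 0 :=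
  intEntry_induction (p := (· = 0)) rfl fun i' j' hi hj => hB i' j' (by omega)

end Zero

section Order

variable [Zero R] [Preorder R] {B : Matrix (Fin q) (Fin q) R}

theorem intEntry_self_nonneg (h : ∀ i, 0 ≤ B i i) (n : ℤ) : 0 ≤ B.intEntry n n :=
  intEntry_induction (p := (0 ≤ ·)) le_rfl fun i j hi hj => by
    obtain rfl : i = j := Fin.ext (by omega)
    exact h i

theorem intEntry_self_nonpos (h : ∀ i, B i i ≤ 0) (n : ℤ) : B.intEntry n n ≤ 0 :=
  intEntry_induction (p := (· ≤ 0)) le_rfl fun i j hi hj => by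
    obtain rfl : i = j := Fin.ext (by omega)
    exact h i

theorem intEntry_add_one_nonpos (h : ∀ i j : Fin q, j.val = i.val + 1 → B i j ≤ 0) (n : ℤ) :
    B.intEntry n (n + 1) ≤ 0 :=
  intEntry_induction (p := (· ≤ 0)) le_rfl fun i j hi hj => h i j (by omega)

theorem intEntry_add_one_left_nonneg (h : ∀ i j : Fin q, i.val = j.val + 1 → 0 ≤ B i j)
    (n : ℤ) : 0 ≤ B.intEntry (n + 1) n :=
  intEntry_induction (p := (0 ≤ ·)) le_rfl fun i j hi hj => h i j (by omega)

theorem intEntry_add_one_left_nonpos (h : ∀ i j : Fin q, i.val = j.val + 1 → B i j ≤ 0)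
    (n : ℤ) : B.intEntry (n + 1) n ≤ 0 :=
  intEntry_induction (p := (· ≤ 0)) le_rfl fun i j hi hj => h i j (by omega)

end Order

section Mul

variable [NonUnitalNonAssocSemiring R] {X Y : Matrix (Fin q) (Fin q) R} {i j : ℤ}

theorem intEntry_add : (X + Y).intEntry i j = X.intEntry i j + Y.intEntry i j := by
  unfold intEntry
  split_ifs <;> simp

theorem intEntry_mul_transpose :
    (X * Yᵀ).intEntry i j = ∑ k : Fin q, X.intEntry i k * Y.intEntry j k := by
  by_cases h : 0 ≤ i ∧ i < q ∧ 0 ≤ j ∧ j < q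
  · obtain ⟨i', rfl⟩ : ∃ i' : Fin q, (i' : ℤ) = i := ⟨⟨i.toNat, by omega⟩, by simp; omega⟩
    obtain ⟨j', rfl⟩ : ∃ j' : Fin q, (j' : ℤ) = j := ⟨⟨j.toNat, by omega⟩, by simp; omega⟩
    simp [mul_apply]
  · rw [intEntry_of_not_mem h]
    refine (Finset.sum_eq_zero fun k _ => ?_).symm
    by_cases hi : 0 ≤ i ∧ i < q
    · rw [intEntry_of_not_mem (B := Y) (by omega), mul_zero]
    · rw [intEntry_of_not_mem (B := X) (by omega), zero_mul]

theorem intEntry_mul_transpose_eq_add (m : ℤ)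
    (hX : ∀ k, k ≠ m → k ≠ m + 1 → X.intEntry i k = 0) :
    (X * Yᵀ).intEntry i j =
      X.intEntry i m * Y.intEntry j m + X.intEntry i (m + 1) * Y.intEntry j (m + 1) := by
  rw [intEntry_mul_transpose]
  exact Fin.sum_intCast_eq_add (F := fun k => X.intEntry i k * Y.intEntry j k) m
    (fun k h₁ h₂ => by rw [hX k h₁ h₂, zero_mul])
    (fun k hk => by rw [intEntry_of_not_mem (B := X) (by omega), zero_mul])

theorem IsUpperBidiagonal.intEntry_mul_transpose (hX : X.IsUpperBidiagonal) (Y) (i j : ℤ) :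
    (X * Yᵀ).intEntry i j =
      X.intEntry i i * Y.intEntry j i + X.intEntry i (i + 1) * Y.intEntry j (i + 1) :=
  intEntry_mul_transpose_eq_add i fun _ h₁ h₂ => hX.intEntry_eq_zero h₁ h₂

theorem IsLowerBidiagonal.intEntry_mul_transpose (hX : X.IsLowerBidiagonal) (Y) (i j : ℤ) :
    (X * Yᵀ).intEntry i j =
      X.intEntry i (i - 1) * Y.intEntry j (i - 1) + X.intEntry i i * Y.intEntry j i := by
  simpa using intEntry_mul_transpose_eq_add (Y := Y) (j := j) (i - 1)
    fun _ h₁ h₂ => hX.intEntry_eq_zero (by omega) (by omega)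

theorem IsUpperBidiagonal.intEntry_transpose_mul (hX : X.IsUpperBidiagonal) (Y) (i j : ℤ) :
    (Xᵀ * Y).intEntry i j =
      X.intEntry (i - 1) i * Y.intEntry (i - 1) j + X.intEntry i i * Y.intEntry i j := by
  simpa [intEntry_transpose] using hX.transpose.intEntry_mul_transpose Yᵀ i j

theorem IsLowerBidiagonal.intEntry_transpose_mul (hX : X.IsLowerBidiagonal) (Y) (i j : ℤ) :
    (Xᵀ * Y).intEntry i j =
      X.intEntry i i * Y.intEntry i j + X.intEntry (i + 1) i * Y.intEntry (i + 1) j := by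
  simpa [intEntry_transpose] using hX.transpose.intEntry_mul_transpose Yᵀ i j

end Mul

end Matrix

section Angle

open Real

noncomputable def arcsinNorm (x y : ℝ) : ℝ := arcsin √(x ^ 2 + y ^ 2)

theorem arcsinNorm_mem_Icc (x y : ℝ) : arcsinNorm x y ∈ Set.Icc 0 (π / 2) :=
  ⟨arcsin_nonneg.2 (sqrt_nonneg _), arcsin_le_pi_div_two _⟩

theorem sin_arcsinNorm_nonneg (x y : ℝ) : 0 ≤ sin (arcsinNorm x y) :=
  sin_nonneg_of_nonneg_of_le_pi (arcsinNorm_mem_Icc x y).1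
    ((arcsinNorm_mem_Icc x y).2.trans (by linarith [pi_pos]))

theorem arcsinNorm_zero : arcsinNorm 0 0 = 0 := by simp [arcsinNorm]

/-- The hypotheses say `U Uᵀ = p pᵀ` for the matrix `U` with columns `u` and `v`, so both columns
lie on the line through the unit vector `p`. -/
theorem eq_cos_sin_mul_of_gram_eq {p₁ p₂ u₁ u₂ v₁ v₂ : ℝ} (hp₁ : 0 ≤ p₁) (hp₂ : 0 ≤ p₂)
    (hp : p₁ ^ 2 + p₂ ^ 2 = 1) (h₁₁ : u₁ ^ 2 + v₁ ^ 2 = p₁ ^ 2)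
    (h₁₂ : u₁ * u₂ + v₁ * v₂ = p₁ * p₂) (h₂₂ : u₂ ^ 2 + v₂ ^ 2 = p₂ ^ 2)
    (hu₁ : 0 ≤ u₁) (hu₂ : 0 ≤ u₂) (hv₁ : v₁ ≤ 0) (hv₂ : v₂ ≤ 0) :
    u₁ = cos (arcsinNorm v₁ v₂) * p₁ ∧ u₂ = cos (arcsinNorm v₁ v₂) * p₂ ∧
      v₁ = -(sin (arcsinNorm v₁ v₂) * p₁) ∧ v₂ = -(sin (arcsinNorm v₁ v₂) * p₂) := by
  have hdet : (p₂ * u₁ - p₁ * u₂) ^ 2 + (p₂ * v₁ - p₁ * v₂) ^ 2 = 0 := by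
    linear_combination p₂ ^ 2 * h₁₁ - 2 * p₁ * p₂ * h₁₂ + p₁ ^ 2 * h₂₂
  obtain ⟨hu, hv⟩ := (add_eq_zero_iff_of_nonneg (sq_nonneg _) (sq_nonneg _)).1 hdet
  rw [sq_eq_zero_iff] at hu hv
  have hc : 0 ≤ p₁ * u₁ + p₂ * u₂ := by positivity
  have hs : 0 ≤ -(p₁ * v₁ + p₂ * v₂) :=
    neg_nonneg.2 (add_nonpos (mul_nonpos_of_nonneg_of_nonpos hp₁ hv₁)
      (mul_nonpos_of_nonneg_of_nonpos hp₂ hv₂))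
  have hcs : (p₁ * u₁ + p₂ * u₂) ^ 2 + (-(p₁ * v₁ + p₂ * v₂)) ^ 2 = 1 := by
    linear_combination (u₁ ^ 2 + u₂ ^ 2 + v₁ ^ 2 + v₂ ^ 2 + 1) * hp + h₁₁ + h₂₂
      - (p₂ * u₁ - p₁ * u₂) * hu - (p₂ * v₁ - p₁ * v₂) * hv
  have hnorm : √(v₁ ^ 2 + v₂ ^ 2) = -(p₁ * v₁ + p₂ * v₂) := by
    rw [← sqrt_sq hs]
    congr 1
    linear_combination -(v₁ ^ 2 + v₂ ^ 2) * hp + (p₂ * v₁ - p₁ * v₂) * hv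
  have hsin : sin (arcsinNorm v₁ v₂) = -(p₁ * v₁ + p₂ * v₂) := by
    rw [arcsinNorm, hnorm, sin_arcsin (by linarith) (by nlinarith)]
  have hcos : cos (arcsinNorm v₁ v₂) = p₁ * u₁ + p₂ * u₂ := by
    rw [arcsinNorm, hnorm, cos_arcsin, ← sqrt_sq hc]
    congr 1
    linear_combination -hcs
  rw [hcos, hsin]
  refine ⟨?_, ?_, ?_, ?_⟩
  · linear_combination p₂ * hu - u₁ * hp
  · linear_combination -p₁ * hu - u₂ * hp
  · linear_combination p₂ * hv - v₁ * hp
  · linear_combination -p₁ * hv - v₂ * hp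

end Angle

namespace BidiagonalBlock

open Matrix Real

variable {q : ℕ} {B₁₁ B₁₂ B₂₁ B₂₂ : Matrix (Fin q) (Fin q) ℝ}

structure SignPattern (B₁₁ B₁₂ B₂₁ B₂₂ : Matrix (Fin q) (Fin q) ℝ) : Prop where
  upper₁₁ : B₁₁.IsUpperBidiagonal
  diag₁₁ : ∀ i, 0 ≤ B₁₁ i i
  super₁₁ : ∀ i j : Fin q, j.val = i.val + 1 → B₁₁ i j ≤ 0
  lower₁₂ : B₁₂.IsLowerBidiagonal
  diag₁₂ : ∀ i, 0 ≤ B₁₂ i i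
  sub₁₂ : ∀ i j : Fin q, i.val = j.val + 1 → 0 ≤ B₁₂ i j
  upper₂₁ : B₂₁.IsUpperBidiagonal
  diag₂₁ : ∀ i, B₂₁ i i ≤ 0
  super₂₁ : ∀ i j : Fin q, j.val = i.val + 1 → B₂₁ i j ≤ 0
  lower₂₂ : B₂₂.IsLowerBidiagonal
  diag₂₂ : ∀ i, 0 ≤ B₂₂ i i
  sub₂₂ : ∀ i j : Fin q, i.val = j.val + 1 → B₂₂ i j ≤ 0

noncomputable def theta (B₂₁ B₂₂ : Matrix (Fin q) (Fin q) ℝ) (n : ℤ) : ℝ :=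
  arcsinNorm (B₂₁.intEntry n n) (B₂₂.intEntry n (n - 1))

noncomputable def phi (B₁₁ B₂₁ : Matrix (Fin q) (Fin q) ℝ) (n : ℤ) : ℝ :=
  arcsinNorm (B₁₁.intEntry n (n + 1)) (B₂₁.intEntry n (n + 1))

theorem phi_eq_zero {n : ℤ} (h : ¬(0 ≤ n ∧ n + 1 < q)) : phi B₁₁ B₂₁ n = 0 := by
  rw [phi, intEntry_of_not_mem (by omega), intEntry_of_not_mem (by omega), arcsinNorm_zero]

/-- The entries of row `n` in which `θₙ` meets `φₙ₋₁`. -/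
def FirstEntriesEq (B₁₁ B₁₂ B₂₁ B₂₂ : Matrix (Fin q) (Fin q) ℝ) (n : ℤ) : Prop :=
  B₁₁.intEntry n n = cos (theta B₂₁ B₂₂ n) * cos (phi B₁₁ B₂₁ (n - 1)) ∧
  B₁₂.intEntry n (n - 1) = cos (theta B₂₁ B₂₂ n) * sin (phi B₁₁ B₂₁ (n - 1)) ∧
  B₂₁.intEntry n n = -(sin (theta B₂₁ B₂₂ n) * cos (phi B₁₁ B₂₁ (n - 1))) ∧
  B₂₂.intEntry n (n - 1) = -(sin (theta B₂₁ B₂₂ n) * sin (phi B₁₁ B₂₁ (n - 1)))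

/-- The entries of row `n` in which `θₙ` meets `φₙ`. -/
def SecondEntriesEq (B₁₁ B₁₂ B₂₁ B₂₂ : Matrix (Fin q) (Fin q) ℝ) (n : ℤ) : Prop :=
  B₁₁.intEntry n (n + 1) = -(sin (theta B₂₁ B₂₂ n) * sin (phi B₁₁ B₂₁ n)) ∧
  B₂₁.intEntry n (n + 1) = -(cos (theta B₂₁ B₂₂ n) * sin (phi B₁₁ B₂₁ n)) ∧
  B₁₂.intEntry n n = sin (theta B₂₁ B₂₂ n) * cos (phi B₁₁ B₂₁ n) ∧
  B₂₂.intEntry n n = cos (theta B₂₁ B₂₂ n) * cos (phi B₁₁ B₂₁ n)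

theorem SignPattern.firstEntriesEq_zero (hB : SignPattern B₁₁ B₁₂ B₂₁ B₂₂)
    (horth : fromBlocks B₁₁ B₁₂ B₂₁ B₂₂ ∈ orthogonalGroup (Fin q ⊕ Fin q) ℝ) (hq : 0 < q) :
    FirstEntriesEq B₁₁ B₁₂ B₂₁ B₂₂ 0 := by
  obtain ⟨hLL, -, -⟩ := fromBlocks_mem_orthogonalGroup_iff'.1 horth
  have hout : ∀ B : Matrix (Fin q) (Fin q) ℝ, ∀ j,
      B.intEntry (0 - 1) j = 0 ∧ B.intEntry j (0 - 1) = 0 :=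
    fun B j => ⟨intEntry_of_not_mem (by omega), intEntry_of_not_mem (by omega)⟩
  have r := congrArg (intEntry · 0 0) hLL
  simp only [intEntry_add, hB.upper₁₁.intEntry_transpose_mul, hB.upper₂₁.intEntry_transpose_mul,
    intEntry_one_self le_rfl (Int.natCast_pos.2 hq), (hout _ _).1, zero_mul, zero_add] at r
  unfold FirstEntriesEq theta
  rw [phi_eq_zero (by omega), cos_zero, sin_zero, (hout B₁₂ 0).2, (hout B₂₂ 0).2]
  exact eq_cos_sin_mul_of_gram_eq zero_le_one le_rfl (by norm_num) (by linear_combination r)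
    (by ring) (by ring) (intEntry_self_nonneg hB.diag₁₁ 0) le_rfl
    (intEntry_self_nonpos hB.diag₂₁ 0) le_rfl

theorem SignPattern.secondEntriesEq (hB : SignPattern B₁₁ B₁₂ B₂₁ B₂₂)
    (horth : fromBlocks B₁₁ B₁₂ B₂₁ B₂₂ ∈ orthogonalGroup (Fin q ⊕ Fin q) ℝ) {n : ℤ}
    (h₀ : 0 ≤ n) (hn : n < q) (h : FirstEntriesEq B₁₁ B₁₂ B₂₁ B₂₂ n) :
    SecondEntriesEq B₁₁ B₁₂ B₂₁ B₂₂ n := by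
  obtain ⟨hTT, hTB, hBB⟩ := fromBlocks_mem_orthogonalGroup_iff.1 horth
  have rTT := congrArg (intEntry · n n) hTT
  have rTB := congrArg (intEntry · n n) hTB
  have rBB := congrArg (intEntry · n n) hBB
  obtain ⟨ha, hd, he, hh⟩ := h
  simp only [intEntry_add, hB.upper₁₁.intEntry_mul_transpose, hB.lower₁₂.intEntry_mul_transpose,
    hB.upper₂₁.intEntry_mul_transpose, hB.lower₂₂.intEntry_mul_transpose,
    intEntry_one_self h₀ hn, intEntry_zero, ha, hd, he, hh] at rTT rTB rBB
  set θ := theta B₂₁ B₂₂ n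
  set φ := phi B₁₁ B₂₁ (n - 1)
  obtain ⟨hc, hg, hb, hf⟩ := eq_cos_sin_mul_of_gram_eq (p₁ := sin θ) (p₂ := cos θ)
    (sin_arcsinNorm_nonneg _ _) (cos_arcsin_nonneg _) (sin_sq_add_cos_sq θ)
    (by linear_combination rTT - cos θ ^ 2 * cos_sq_add_sin_sq φ - sin_sq_add_cos_sq θ)
    (by linear_combination rTB + sin θ * cos θ * cos_sq_add_sin_sq φ)
    (by linear_combination rBB - sin θ ^ 2 * cos_sq_add_sin_sq φ - sin_sq_add_cos_sq θ)
    (intEntry_self_nonneg hB.diag₁₂ n) (intEntry_self_nonneg hB.diag₂₂ n)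
    (intEntry_add_one_nonpos hB.super₁₁ n) (intEntry_add_one_nonpos hB.super₂₁ n)
  unfold SecondEntriesEq phi
  exact ⟨by linear_combination hb, by linear_combination hf, by linear_combination hc,
    by linear_combination hg⟩

theorem SignPattern.firstEntriesEq_succ (hB : SignPattern B₁₁ B₁₂ B₂₁ B₂₂)
    (horth : fromBlocks B₁₁ B₁₂ B₂₁ B₂₂ ∈ orthogonalGroup (Fin q ⊕ Fin q) ℝ) {n : ℤ}
    (h₀ : 0 ≤ n) (hn : n + 1 < q) (h : SecondEntriesEq B₁₁ B₁₂ B₂₁ B₂₂ n) :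
    FirstEntriesEq B₁₁ B₁₂ B₂₁ B₂₂ (n + 1) := by
  obtain ⟨hLL, hLR, hRR⟩ := fromBlocks_mem_orthogonalGroup_iff'.1 horth
  have rLL := congrArg (intEntry · (n + 1) (n + 1)) hLL
  have rLR := congrArg (intEntry · (n + 1) n) hLR
  have rRR := congrArg (intEntry · n n) hRR
  obtain ⟨hb, hf, hc, hg⟩ := h
  simp only [intEntry_add, hB.upper₁₁.intEntry_transpose_mul, hB.lower₁₂.intEntry_transpose_mul,
    hB.upper₂₁.intEntry_transpose_mul, hB.lower₂₂.intEntry_transpose_mul, add_sub_cancel_right,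
    intEntry_one_self (by omega : 0 ≤ n + 1) hn, intEntry_one_self h₀ (by omega : n < q),
    intEntry_zero, hb, hf, hc, hg] at rLL rLR rRR
  set θ := theta B₂₁ B₂₂ n
  set φ := phi B₁₁ B₂₁ n
  unfold FirstEntriesEq theta
  simp only [add_sub_cancel_right]
  exact eq_cos_sin_mul_of_gram_eq (p₁ := cos φ) (p₂ := sin φ)
    (cos_arcsin_nonneg _) (sin_arcsinNorm_nonneg _ _) (cos_sq_add_sin_sq φ)
    (by linear_combination rLL - sin φ ^ 2 * sin_sq_add_cos_sq θ - cos_sq_add_sin_sq φ)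
    (by linear_combination rLR + sin φ * cos φ * sin_sq_add_cos_sq θ)
    (by linear_combination rRR - cos φ ^ 2 * sin_sq_add_cos_sq θ - cos_sq_add_sin_sq φ)
    (intEntry_self_nonneg hB.diag₁₁ _) (intEntry_add_one_left_nonneg hB.sub₁₂ n)
    (intEntry_self_nonpos hB.diag₂₁ _) (intEntry_add_one_left_nonpos hB.sub₂₂ n)

theorem SignPattern.entriesEq (hB : SignPattern B₁₁ B₁₂ B₂₁ B₂₂)
    (horth : fromBlocks B₁₁ B₁₂ B₂₁ B₂₂ ∈ orthogonalGroup (Fin q ⊕ Fin q) ℝ) (n : ℕ)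
    (hn : n < q) : FirstEntriesEq B₁₁ B₁₂ B₂₁ B₂₂ n ∧ SecondEntriesEq B₁₁ B₁₂ B₂₁ B₂₂ n := by
  have hfirst : FirstEntriesEq B₁₁ B₁₂ B₂₁ B₂₂ n := by
    induction n with
    | zero => exact hB.firstEntriesEq_zero horth hn
    | succ k ih =>
      push_cast
      exact hB.firstEntriesEq_succ horth (by omega) (by omega) <|
        hB.secondEntriesEq horth (by omega) (by omega) (ih (by omega))
  exact ⟨hfirst, hB.secondEntriesEq horth (by omega) (by omega) hfirst⟩

theorem SignPattern.eq_bdbB11 (hB : SignPattern B₁₁ B₁₂ B₂₁ B₂₂)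
    (horth : fromBlocks B₁₁ B₁₂ B₂₁ B₂₂ ∈ orthogonalGroup (Fin q ⊕ Fin q) ℝ) :
    B₁₁ = bdbB11 q (fun i => theta B₂₁ B₂₂ i) (fun i => phi B₁₁ B₂₁ i) := by
  ext i j
  have h := hB.entriesEq horth i i.isLt
  unfold bdbB11
  split_ifs with h₁ h₂ h₃
  · rw [← intEntry_natCast B₁₁ i j, Fin.ext h₁, h.1.1]
    congr 3
    dsimp only
    omega
  · rw [← intEntry_natCast B₁₁ i j, Fin.ext h₁, h.1.1, phi_eq_zero (by omega), cos_zero]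
  · rw [← intEntry_natCast B₁₁ i j, show ((j : ℕ) : ℤ) = i + 1 by omega, h.2.1]
  · exact hB.upper₁₁ i j (by omega)

theorem SignPattern.eq_bdbB12 (hB : SignPattern B₁₁ B₁₂ B₂₁ B₂₂)
    (horth : fromBlocks B₁₁ B₁₂ B₂₁ B₂₂ ∈ orthogonalGroup (Fin q ⊕ Fin q) ℝ) :
    B₁₂ = bdbB12 q (fun i => theta B₂₁ B₂₂ i) (fun i => phi B₁₁ B₂₁ i) := by
  ext i j
  have h := hB.entriesEq horth i i.isLt
  unfold bdbB12
  split_ifs with h₁ h₂ h₃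
  · rw [← intEntry_natCast B₁₂ i j, Fin.ext h₁, h.2.2.2.1]
  · rw [← intEntry_natCast B₁₂ i j, Fin.ext h₁, h.2.2.2.1, phi_eq_zero (by omega), cos_zero]
  · rw [← intEntry_natCast B₁₂ i j, show ((j : ℕ) : ℤ) = i - 1 by omega, h.1.2.1]
    congr 3
    dsimp only
    omega
  · exact hB.lower₁₂ i j (by omega)

theorem SignPattern.eq_bdbB21 (hB : SignPattern B₁₁ B₁₂ B₂₁ B₂₂)
    (horth : fromBlocks B₁₁ B₁₂ B₂₁ B₂₂ ∈ orthogonalGroup (Fin q ⊕ Fin q) ℝ) :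
    B₂₁ = bdbB21 q (fun i => theta B₂₁ B₂₂ i) (fun i => phi B₁₁ B₂₁ i) := by
  ext i j
  have h := hB.entriesEq horth i i.isLt
  unfold bdbB21
  split_ifs with h₁ h₂ h₃
  · rw [← intEntry_natCast B₂₁ i j, Fin.ext h₁, h.1.2.2.1]
    congr 4
    dsimp only
    omega
  · rw [← intEntry_natCast B₂₁ i j, Fin.ext h₁, h.1.2.2.1, phi_eq_zero (by omega), cos_zero]
  · rw [← intEntry_natCast B₂₁ i j, show ((j : ℕ) : ℤ) = i + 1 by omega, h.2.2.1]
  · exact hB.upper₂₁ i j (by omega)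

theorem SignPattern.eq_bdbB22 (hB : SignPattern B₁₁ B₁₂ B₂₁ B₂₂)
    (horth : fromBlocks B₁₁ B₁₂ B₂₁ B₂₂ ∈ orthogonalGroup (Fin q ⊕ Fin q) ℝ) :
    B₂₂ = bdbB22 q (fun i => theta B₂₁ B₂₂ i) (fun i => phi B₁₁ B₂₁ i) := by
  ext i j
  have h := hB.entriesEq horth i i.isLt
  unfold bdbB22
  split_ifs with h₁ h₂ h₃
  · rw [← intEntry_natCast B₂₂ i j, Fin.ext h₁, h.2.2.2.2]
  · rw [← intEntry_natCast B₂₂ i j, Fin.ext h₁, h.2.2.2.2, phi_eq_zero (by omega), cos_zero]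
  · rw [← intEntry_natCast B₂₂ i j, show ((j : ℕ) : ℤ) = i - 1 by omega, h.1.2.2.2]
    congr 4
    dsimp only
    omega
  · exact hB.lower₂₂ i j (by omega)

end BidiagonalBlock

theorem bdb_of_sign_pattern_general (q : ℕ)
    (B₁₁ B₁₂ B₂₁ B₂₂ : Matrix (Fin q) (Fin q) ℝ)
    (horth : Matrix.fromBlocks B₁₁ B₁₂ B₂₁ B₂₂ ∈ Matrix.orthogonalGroup (Fin q ⊕ Fin q) ℝ)
    -- B₁₁ upper bidiagonal, nonnegative diagonal, nonpositive superdiagonal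
    (h11z : ∀ i j : Fin q, ¬(j.val = i.val ∨ j.val = i.val + 1) → B₁₁ i j = 0)
    (h11d : ∀ i : Fin q, 0 ≤ B₁₁ i i)
    (h11s : ∀ i j : Fin q, j.val = i.val + 1 → B₁₁ i j ≤ 0)
    -- B₁₂ lower bidiagonal, nonnegative diagonal and subdiagonal
    (h12z : ∀ i j : Fin q, ¬(j.val = i.val ∨ i.val = j.val + 1) → B₁₂ i j = 0)
    (h12d : ∀ i : Fin q, 0 ≤ B₁₂ i i)
    (h12s : ∀ i j : Fin q, i.val = j.val + 1 → 0 ≤ B₁₂ i j)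
    -- B₂₁ upper bidiagonal, nonpositive diagonal and superdiagonal
    (h21z : ∀ i j : Fin q, ¬(j.val = i.val ∨ j.val = i.val + 1) → B₂₁ i j = 0)
    (h21d : ∀ i : Fin q, B₂₁ i i ≤ 0)
    (h21s : ∀ i j : Fin q, j.val = i.val + 1 → B₂₁ i j ≤ 0)
    -- B₂₂ lower bidiagonal, nonnegative diagonal, nonpositive subdiagonal
    (h22z : ∀ i j : Fin q, ¬(j.val = i.val ∨ i.val = j.val + 1) → B₂₂ i j = 0)
    (h22d : ∀ i : Fin q, 0 ≤ B₂₂ i i)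
    (h22s : ∀ i j : Fin q, i.val = j.val + 1 → B₂₂ i j ≤ 0) :
    ∃ (θ : Fin q → ℝ) (φ : Fin (q - 1) → ℝ),
      (∀ i, θ i ∈ Set.Icc 0 (Real.pi / 2)) ∧
      (∀ i, φ i ∈ Set.Icc 0 (Real.pi / 2)) ∧
      B₁₁ = bdbB11 q θ φ ∧ B₁₂ = bdbB12 q θ φ ∧
      B₂₁ = bdbB21 q θ φ ∧ B₂₂ = bdbB22 q θ φ := by
  have hB : BidiagonalBlock.SignPattern B₁₁ B₁₂ B₂₁ B₂₂ :=
    ⟨h11z, h11d, h11s, h12z, h12d, h12s, h21z, h21d, h21s, h22z, h22d, h22s⟩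
  exact ⟨_, _, fun _ => arcsinNorm_mem_Icc _ _, fun _ => arcsinNorm_mem_Icc _ _,
    hB.eq_bdbB11 horth, hB.eq_bdbB12 horth, hB.eq_bdbB21 horth, hB.eq_bdbB22 horth⟩

/-- Any orthogonal matrix with the bidiagonal structure and sign pattern of
bidiagonal block form is expressible in terms of some `θ` and `φ`. -/
theorem bdb_of_sign_pattern (q : ℕ) (hq : 1 ≤ q)
    (B₁₁ B₁₂ B₂₁ B₂₂ : Matrix (Fin q) (Fin q) ℝ)
    (horth : Matrix.fromBlocks B₁₁ B₁₂ B₂₁ B₂₂ ∈ Matrix.orthogonalGroup (Fin q ⊕ Fin q) ℝ)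
    -- B₁₁ upper bidiagonal, nonnegative diagonal, nonpositive superdiagonal
    (h11z : ∀ i j : Fin q, ¬(j.val = i.val ∨ j.val = i.val + 1) → B₁₁ i j = 0)
    (h11d : ∀ i : Fin q, 0 ≤ B₁₁ i i)
    (h11s : ∀ i j : Fin q, j.val = i.val + 1 → B₁₁ i j ≤ 0)
    -- B₁₂ lower bidiagonal, nonnegative diagonal and subdiagonal
    (h12z : ∀ i j : Fin q, ¬(j.val = i.val ∨ i.val = j.val + 1) → B₁₂ i j = 0)
    (h12d : ∀ i : Fin q, 0 ≤ B₁₂ i i)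
    (h12s : ∀ i j : Fin q, i.val = j.val + 1 → 0 ≤ B₁₂ i j)
    -- B₂₁ upper bidiagonal, nonpositive diagonal and superdiagonal
    (h21z : ∀ i j : Fin q, ¬(j.val = i.val ∨ j.val = i.val + 1) → B₂₁ i j = 0)
    (h21d : ∀ i : Fin q, B₂₁ i i ≤ 0)
    (h21s : ∀ i j : Fin q, j.val = i.val + 1 → B₂₁ i j ≤ 0)
    -- B₂₂ lower bidiagonal, nonnegative diagonal, nonpositive subdiagonal
    (h22z : ∀ i j : Fin q, ¬(j.val = i.val ∨ i.val = j.val + 1) → B₂₂ i j = 0)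
    (h22d : ∀ i : Fin q, 0 ≤ B₂₂ i i)
    (h22s : ∀ i j : Fin q, i.val = j.val + 1 → B₂₂ i j ≤ 0) :
    ∃ (θ : Fin q → ℝ) (φ : Fin (q - 1) → ℝ),
      (∀ i, θ i ∈ Set.Icc 0 (Real.pi / 2)) ∧
      (∀ i, φ i ∈ Set.Icc 0 (Real.pi / 2)) ∧
      B₁₁ = bdbB11 q θ φ ∧ B₁₂ = bdbB12 q θ φ ∧
      B₂₁ = bdbB21 q θ φ ∧ B₂₂ = bdbB22 q θ φ :=
  bdb_of_sign_pattern_general q B₁₁ B₁₂ B₂₁ B₂₂ horth h11z h11d h11s h12z h12d h12s h21z h21d h21s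
    h22z h22d h22s
end

section
/- Let q ≥ 1 and let B₁₁, B₂₁ be q-by-q real upper bidiagonal matrices and B₁₂, B₂₂ be q-by-q real lower bidiagonal matrices such that the 2q-by-2q matrix [[B₁₁, B₁₂], [B₂₁, B₂₂]] is orthogonal. Then there exist diagonal signature matrices D₁, D₂, E₁, E₂ (q-by-q) and angles θ ∈ [0, π/2]^q, φ ∈ [0, π/2]^{q−1} such that diag(D₁, D₂) · [[B₁₁, B₁₂], [B₂₁, B₂₂]] · diag(E₁, E₂) = [[B₁₁(θ,φ), B₁₂(θ,φ)], [B₂₁(θ,φ), B₂₂(θ,φ)]], i.e., the sign-adjusted matrix is in bidiagonal block form. -/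
open Matrix

/-!
Number the rows and columns of each block from `0` and extend the blocks by zero to `ℤ × ℤ`, so
that the first and last rows need no special treatment. Row `i` of either block row then meets
only columns `i, i + 1` of the first and `i - 1, i` of the second block column.

Suppose `φᵢ₋₁` and the signs of columns `i` and `i - 1` are known, and that the entries of these
two columns below row `i - 1` form vectors in `ℝ²` of lengths `cos φᵢ₋₁`, `sin φᵢ₋₁` whose signed
inner product is `cos φᵢ₋₁ sin φᵢ₋₁`. By the equality case of Cauchy–Schwarz they are parallel, so
up to the signs `D₁ᵢ, D₂ᵢ` they are `cos φᵢ₋₁ (cos θᵢ, -sin θᵢ)` and `sin φᵢ₋₁ (cos θᵢ, -sin θᵢ)`.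
Orthonormality of the two rows `i` then says the same of their entries in columns `i + 1` and
`i`, with common direction `(sin θᵢ, cos θᵢ)`; this produces `φᵢ` and the signs of those columns,
and orthonormality of those columns hands the hypothesis on to row `i + 1`. In the last row the
superdiagonal entries vanish, which forces `φ_{q-1} = 0`.
-/

open Real Set

lemma exists_angle_of_sq_add_sq {x y r : ℝ} (hx : 0 ≤ x) (hy : 0 ≤ y) (hr : 0 ≤ r)
    (h : x ^ 2 + y ^ 2 = r ^ 2) : ∃ θ ∈ Icc 0 (π / 2), x = r * cos θ ∧ y = r * sin θ := by
  set z : ℂ := ⟨x, y⟩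
  have hz : ‖z‖ = r := by rw [Complex.norm_eq_sqrt_sq_add_sq, h, sqrt_sq hr]
  refine ⟨z.arg, ⟨Complex.arg_nonneg_iff.2 hy, Complex.arg_le_pi_div_two_iff.2 (.inl hx)⟩, ?_, ?_⟩
  · rw [← hz, Complex.norm_mul_cos_arg]
  · rw [← hz, Complex.norm_mul_sin_arg]

lemma exists_sq_eq_one_mul_eq_abs (x : ℝ) : ∃ d : ℝ, d ^ 2 = 1 ∧ d * x = |x| := by
  rcases abs_choice x with h | h
  · exact ⟨1, one_pow 2, by rw [h, one_mul]⟩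
  · exact ⟨-1, by norm_num, by rw [h, neg_one_mul]⟩

lemma exists_signs_angle {x y r : ℝ} (hr : 0 ≤ r) (h : x ^ 2 + y ^ 2 = r ^ 2) :
    ∃ θ ∈ Icc 0 (π / 2), ∃ d e : ℝ, d ^ 2 = 1 ∧ e ^ 2 = 1 ∧
      d * x = r * cos θ ∧ e * y = r * sin θ := by
  obtain ⟨d, hd, hdx⟩ := exists_sq_eq_one_mul_eq_abs x
  obtain ⟨e, he, hey⟩ := exists_sq_eq_one_mul_eq_abs y
  obtain ⟨θ, hθ, hx, hy⟩ :=
    exists_angle_of_sq_add_sq (abs_nonneg x) (abs_nonneg y) hr (by rwa [sq_abs, sq_abs])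
  exact ⟨θ, hθ, d, e, hd, he, hdx.trans hx, hey.trans hy⟩

lemma mul_eq_mul_of_inner_eq_mul {x₁ x₂ y₁ y₂ α β : ℝ} (hx : x₁ ^ 2 + x₂ ^ 2 = α ^ 2)
    (hy : y₁ ^ 2 + y₂ ^ 2 = β ^ 2) (hxy : x₁ * y₁ + x₂ * y₂ = α * β) :
    β * x₁ = α * y₁ ∧ β * x₂ = α * y₂ := by
  have h : (β * x₁ - α * y₁) ^ 2 + (β * x₂ - α * y₂) ^ 2 = 0 := by
    linear_combination β ^ 2 * hx + α ^ 2 * hy - 2 * α * β * hxy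
  rwa [add_eq_zero_iff_of_nonneg (sq_nonneg _) (sq_nonneg _), sq_eq_zero_iff, sq_eq_zero_iff,
    sub_eq_zero, sub_eq_zero] at h

lemma exists_signs_angle_of_inner_eq_mul {x₁ x₂ y₁ y₂ α β : ℝ} (hα : 0 ≤ α) (hβ : 0 ≤ β)
    (hx : x₁ ^ 2 + x₂ ^ 2 = α ^ 2) (hy : y₁ ^ 2 + y₂ ^ 2 = β ^ 2)
    (hxy : x₁ * y₁ + x₂ * y₂ = α * β) :
    ∃ θ ∈ Icc 0 (π / 2), ∃ d₁ d₂ : ℝ, d₁ ^ 2 = 1 ∧ d₂ ^ 2 = 1 ∧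
      d₁ * x₁ = α * cos θ ∧ d₂ * x₂ = α * sin θ ∧
      d₁ * y₁ = β * cos θ ∧ d₂ * y₂ = β * sin θ := by
  rcases hα.eq_or_lt with rfl | hα
  · obtain ⟨θ, hθ, d₁, d₂, hd₁, hd₂, h₁, h₂⟩ := exists_signs_angle hβ hy
    have hx₁ : x₁ = 0 := by nlinarith
    have hx₂ : x₂ = 0 := by nlinarith
    exact ⟨θ, hθ, d₁, d₂, hd₁, hd₂, by simp [hx₁], by simp [hx₂], h₁, h₂⟩
  · obtain ⟨θ, hθ, d₁, d₂, hd₁, hd₂, h₁, h₂⟩ := exists_signs_angle hα.le hx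
    obtain ⟨hy₁, hy₂⟩ := mul_eq_mul_of_inner_eq_mul hx hy hxy
    refine ⟨θ, hθ, d₁, d₂, hd₁, hd₂, h₁, h₂, ?_, ?_⟩ <;> refine mul_left_cancel₀ hα.ne' ?_
    · linear_combination β * h₁ - d₁ * hy₁
    · linear_combination β * h₂ - d₂ * hy₂

lemma sq_eq_sq_of_mul_mul_eq {d e x y : ℝ} (hd : d ^ 2 = 1) (he : e ^ 2 = 1)
    (h : d * x * e = y) : x ^ 2 = y ^ 2 := by
  linear_combination (d * x * e + y) * h - x ^ 2 * hd - x ^ 2 * d ^ 2 * he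

lemma mul_mul_eq_of_mul_mul_eq_left {a b d x y z w : ℝ} (hd : d ^ 2 = 1) (h₁ : d * x * a = z)
    (h₂ : d * y * b = w) : a * b * (x * y) = z * w := by
  linear_combination d * y * b * h₁ + z * h₂ - a * b * x * y * hd

lemma mul_mul_eq_of_mul_mul_eq_right {a b e x y z w : ℝ} (he : e ^ 2 = 1) (h₁ : a * x * e = z)
    (h₂ : b * y * e = w) : a * b * (x * y) = z * w := by
  linear_combination b * y * e * h₁ + z * h₂ - a * b * x * y * he

lemma cos_nonneg_of_mem_Icc_zero_pi_div_two {x : ℝ} (hx : x ∈ Icc 0 (π / 2)) : 0 ≤ cos x :=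
  cos_nonneg_of_mem_Icc ⟨by linarith [pi_pos, hx.1], hx.2⟩

lemma sin_nonneg_of_mem_Icc_zero_pi_div_two {x : ℝ} (hx : x ∈ Icc 0 (π / 2)) : 0 ≤ sin x :=
  sin_nonneg_of_nonneg_of_le_pi hx.1 (by linarith [pi_pos, hx.2])

section ZeroExtension

variable {q : ℕ}

noncomputable def zeroExt (f : Fin q → ℝ) : ℤ → ℝ :=
  Function.extend (fun m : Fin q => ((m : ℕ) : ℤ)) f 0

lemma Fin.natCast_val_injective : Function.Injective (fun m : Fin q => ((m : ℕ) : ℤ)) :=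
  Nat.cast_injective.comp Fin.val_injective

@[simp] lemma zeroExt_coe (f : Fin q → ℝ) (m : Fin q) : zeroExt f (m : ℕ) = f m :=
  Fin.natCast_val_injective.extend_apply f 0 m

lemma zeroExt_eq_zero (f : Fin q → ℝ) {k : ℤ} (hk : k < 0 ∨ q ≤ k) : zeroExt f k = 0 :=
  Function.extend_apply' _ _ _ (by rintro ⟨m, rfl⟩; omega)

lemma sum_mul_eq_zeroExt (f g : Fin q → ℝ) (k : ℤ)
    (hf : ∀ m : Fin q, ((m : ℕ) : ℤ) ≠ k → ((m : ℕ) : ℤ) ≠ k + 1 → f m = 0) :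
    ∑ m, f m * g m = zeroExt f k * zeroExt g k + zeroExt f (k + 1) * zeroExt g (k + 1) := by
  have hfg : zeroExt (f * g) = zeroExt f * zeroExt g := by
    rw [zeroExt, zeroExt, zeroExt, ← Function.extend_mul, mul_zero]
  let ι : Fin q ↪ ℤ := ⟨_, Fin.natCast_val_injective⟩
  calc ∑ m, f m * g m = ∑ m, zeroExt (f * g) (ι m) := by simp [ι]
    _ = ∑ x ∈ Finset.univ.map ι, zeroExt (f * g) x := (Finset.sum_map _ _ _).symm
    _ = zeroExt (f * g) k + zeroExt (f * g) (k + 1) := by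
      refine Finset.sum_eq_add k (k + 1) (by omega) ?_ ?_ ?_
      · simp only [Finset.mem_map, Finset.mem_univ, true_and]
        rintro _ ⟨m, rfl⟩ ⟨h₁, h₂⟩
        simp [ι, hf m h₁ h₂]
      all_goals
        refine fun hk => Function.extend_apply' _ _ _ fun ⟨m, hm⟩ => hk ?_
        simp [ι, ← hm]
    _ = _ := by rw [hfg]; rfl

noncomputable def zeroExt₂ (M : Matrix (Fin q) (Fin q) ℝ) (i j : ℤ) : ℝ :=
  zeroExt (fun a => zeroExt (M a) j) i

@[simp] lemma zeroExt₂_coe_left (M : Matrix (Fin q) (Fin q) ℝ) (a : Fin q) (j : ℤ) :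
    zeroExt₂ M (a : ℕ) j = zeroExt (M a) j :=
  zeroExt_coe _ a

lemma zeroExt₂_coe_right (M : Matrix (Fin q) (Fin q) ℝ) (i : ℤ) (b : Fin q) :
    zeroExt₂ M i (b : ℕ) = zeroExt (fun a => M a b) i := by
  simp [zeroExt₂]

lemma zeroExt₂_eq_zero (M : Matrix (Fin q) (Fin q) ℝ) {i j : ℤ}
    (h : i < 0 ∨ q ≤ i ∨ j < 0 ∨ q ≤ j) : zeroExt₂ M i j = 0 := by
  by_cases hi : i < 0 ∨ q ≤ i
  · exact zeroExt_eq_zero _ hi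
  · simp only [zeroExt₂, zeroExt_eq_zero _ (by omega : j < 0 ∨ q ≤ j)]
    exact congrFun (Function.extend_zero _) i

lemma sum_mul_row_eq_zeroExt₂ (M N : Matrix (Fin q) (Fin q) ℝ) (a c : Fin q) (k : ℤ)
    (hM : ∀ m : Fin q, ((m : ℕ) : ℤ) ≠ k → ((m : ℕ) : ℤ) ≠ k + 1 → M a m = 0) :
    ∑ m, M a m * N c m =
      zeroExt₂ M (a : ℕ) k * zeroExt₂ N (c : ℕ) k
        + zeroExt₂ M (a : ℕ) (k + 1) * zeroExt₂ N (c : ℕ) (k + 1) := by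
  simpa using sum_mul_eq_zeroExt (M a) (N c) k hM

lemma sum_mul_col_eq_zeroExt₂ (M N : Matrix (Fin q) (Fin q) ℝ) (b c : Fin q) (k : ℤ)
    (hM : ∀ m : Fin q, ((m : ℕ) : ℤ) ≠ k → ((m : ℕ) : ℤ) ≠ k + 1 → M m b = 0) :
    ∑ m, M m b * N m c =
      zeroExt₂ M k (b : ℕ) * zeroExt₂ N k (c : ℕ)
        + zeroExt₂ M (k + 1) (b : ℕ) * zeroExt₂ N (k + 1) (c : ℕ) := by
  simpa [zeroExt₂_coe_right] using sum_mul_eq_zeroExt (fun m => M m b) (fun m => N m c) k hM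

end ZeroExtension

def Matrix.IsUpperBidiagonal_s4 {α : Type*} [Zero α] {q : ℕ} (M : Matrix (Fin q) (Fin q) α) : Prop :=
  ∀ i j : Fin q, ¬(j.val = i.val ∨ j.val = i.val + 1) → M i j = 0

def Matrix.IsLowerBidiagonal_s4 {α : Type*} [Zero α] {q : ℕ} (M : Matrix (Fin q) (Fin q) α) : Prop :=
  ∀ i j : Fin q, ¬(j.val = i.val ∨ i.val = j.val + 1) → M i j = 0

namespace BidiagonalBlockForm

structure IntBlocks where
  b₁₁ : ℤ → ℤ → ℝ
  b₁₂ : ℤ → ℤ → ℝ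
  b₂₁ : ℤ → ℤ → ℝ
  b₂₂ : ℤ → ℤ → ℝ

structure RowPairOrthonormal (Z : IntBlocks) (i : ℤ) : Prop where
  norm₁ : Z.b₁₁ i i ^ 2 + Z.b₁₂ i (i - 1) ^ 2 + Z.b₁₁ i (i + 1) ^ 2 + Z.b₁₂ i i ^ 2 = 1
  norm₂ : Z.b₂₁ i i ^ 2 + Z.b₂₂ i (i - 1) ^ 2 + Z.b₂₁ i (i + 1) ^ 2 + Z.b₂₂ i i ^ 2 = 1
  inner : Z.b₁₁ i i * Z.b₂₁ i i + Z.b₁₂ i (i - 1) * Z.b₂₂ i (i - 1)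
    + Z.b₁₁ i (i + 1) * Z.b₂₁ i (i + 1) + Z.b₁₂ i i * Z.b₂₂ i i = 0

structure ColPairOrthonormal (Z : IntBlocks) (i : ℤ) : Prop where
  norm₁ : Z.b₁₁ i (i + 1) ^ 2 + Z.b₂₁ i (i + 1) ^ 2
    + Z.b₁₁ (i + 1) (i + 1) ^ 2 + Z.b₂₁ (i + 1) (i + 1) ^ 2 = 1
  norm₂ : Z.b₁₂ i i ^ 2 + Z.b₂₂ i i ^ 2 + Z.b₁₂ (i + 1) i ^ 2 + Z.b₂₂ (i + 1) i ^ 2 = 1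
  inner : Z.b₁₁ i (i + 1) * Z.b₁₂ i i + Z.b₂₁ i (i + 1) * Z.b₂₂ i i
    + Z.b₁₁ (i + 1) (i + 1) * Z.b₁₂ (i + 1) i + Z.b₂₁ (i + 1) (i + 1) * Z.b₂₂ (i + 1) i = 0

structure OrthoRelations (q : ℕ) (Z : IntBlocks) : Prop where
  row : ∀ n : ℕ, n < q → RowPairOrthonormal Z n
  col : ∀ n : ℕ, n + 1 < q → ColPairOrthonormal Z n
  col_zero : 0 < q → Z.b₁₁ 0 0 ^ 2 + Z.b₂₁ 0 0 ^ 2 = 1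
  left_edge : Z.b₁₂ 0 (-1) = 0 ∧ Z.b₂₂ 0 (-1) = 0
  right_edge : Z.b₁₁ (q - 1) q = 0 ∧ Z.b₂₁ (q - 1) q = 0

/-- The choices made at row `i`: `θᵢ, φᵢ, D₁ᵢ, D₂ᵢ, E₂ᵢ`, and, in `e₁`, the sign `E₁ᵢ₊₁` of the
next column of the first block column. -/
structure StepData where
  θ : ℝ
  φ : ℝ
  d₁ : ℝ
  d₂ : ℝ
  e₁ : ℝ
  e₂ : ℝ

structure StepData.Valid (t : StepData) : Prop where
  θ_mem : t.θ ∈ Icc 0 (π / 2)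
  φ_mem : t.φ ∈ Icc 0 (π / 2)
  d₁_sq : t.d₁ ^ 2 = 1
  d₂_sq : t.d₂ ^ 2 = 1
  e₁_sq : t.e₁ ^ 2 = 1
  e₂_sq : t.e₂ ^ 2 = 1

lemma StepData.valid_init : (⟨0, 0, 1, 1, 1, 1⟩ : StepData).Valid :=
  ⟨⟨le_rfl, by positivity⟩, ⟨le_rfl, by positivity⟩, one_pow 2, one_pow 2, one_pow 2, one_pow 2⟩

def LeftEqs (Z : IntBlocks) (s t : StepData) (i : ℤ) : Prop :=
  t.d₁ * Z.b₁₁ i i * s.e₁ = cos t.θ * cos s.φ ∧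
  t.d₂ * Z.b₂₁ i i * s.e₁ = -(sin t.θ * cos s.φ) ∧
  t.d₁ * Z.b₁₂ i (i - 1) * s.e₂ = cos t.θ * sin s.φ ∧
  t.d₂ * Z.b₂₂ i (i - 1) * s.e₂ = -(sin t.θ * sin s.φ)

def RightEqs (Z : IntBlocks) (t : StepData) (i : ℤ) : Prop :=
  t.d₁ * Z.b₁₁ i (i + 1) * t.e₁ = -(sin t.θ * sin t.φ) ∧
  t.d₂ * Z.b₂₁ i (i + 1) * t.e₁ = -(cos t.θ * sin t.φ) ∧
  t.d₁ * Z.b₁₂ i i * t.e₂ = sin t.θ * cos t.φ ∧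
  t.d₂ * Z.b₂₂ i i * t.e₂ = cos t.θ * cos t.φ

def ColPairRemainder (Z : IntBlocks) (s : StepData) (i : ℤ) : Prop :=
  Z.b₁₁ i i ^ 2 + Z.b₂₁ i i ^ 2 = cos s.φ ^ 2 ∧
  Z.b₁₂ i (i - 1) ^ 2 + Z.b₂₂ i (i - 1) ^ 2 = sin s.φ ^ 2 ∧
  s.e₁ * s.e₂ * (Z.b₁₁ i i * Z.b₁₂ i (i - 1) + Z.b₂₁ i i * Z.b₂₂ i (i - 1)) = cos s.φ * sin s.φ

section Steps

variable {Z : IntBlocks} {s t : StepData} {i : ℤ}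

lemma exists_leftEqs (hs : s.Valid) (hcol : ColPairRemainder Z s i) :
    ∃ t : StepData, t.Valid ∧ LeftEqs Z s t i := by
  obtain ⟨h₁, h₂, h₁₂⟩ := hcol
  obtain ⟨θ, hθ, d₁, d₂, hd₁, hd₂, h₁₁, h₂₁, h₁₂, h₂₂⟩ :=
    exists_signs_angle_of_inner_eq_mul (cos_nonneg_of_mem_Icc_zero_pi_div_two hs.φ_mem)
      (sin_nonneg_of_mem_Icc_zero_pi_div_two hs.φ_mem)
      (x₁ := s.e₁ * Z.b₁₁ i i) (x₂ := -(s.e₁ * Z.b₂₁ i i))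
      (y₁ := s.e₂ * Z.b₁₂ i (i - 1)) (y₂ := -(s.e₂ * Z.b₂₂ i (i - 1)))
      (by linear_combination (Z.b₁₁ i i ^ 2 + Z.b₂₁ i i ^ 2) * hs.e₁_sq + h₁)
      (by linear_combination (Z.b₁₂ i (i - 1) ^ 2 + Z.b₂₂ i (i - 1) ^ 2) * hs.e₂_sq + h₂)
      (by linear_combination h₁₂)
  refine ⟨⟨θ, 0, d₁, d₂, 1, 1⟩, ⟨hθ, ⟨le_rfl, by positivity⟩, hd₁, hd₂, one_pow 2, one_pow 2⟩,
    ?_, ?_, ?_, ?_⟩ <;> dsimp only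
  · linear_combination h₁₁
  · linear_combination -h₂₁
  · linear_combination h₁₂
  · linear_combination -h₂₂

lemma exists_rightEqs_of_leftEqs (hs : s.Valid) (ht : t.Valid) (hrow : RowPairOrthonormal Z i)
    (hL : LeftEqs Z s t i) : ∃ t' : StepData, t'.Valid ∧ LeftEqs Z s t' i ∧ RightEqs Z t' i := by
  obtain ⟨hA, hG, hR, hV⟩ := hL
  have pθ := sin_sq_add_cos_sq t.θ
  have pφ := sin_sq_add_cos_sq s.φ
  obtain ⟨φ, hφ, f₁, f₂, hf₁, hf₂, h₁₂, h₁₁, h₂₂, h₂₁⟩ :=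
    exists_signs_angle_of_inner_eq_mul (sin_nonneg_of_mem_Icc_zero_pi_div_two ht.θ_mem)
      (cos_nonneg_of_mem_Icc_zero_pi_div_two ht.θ_mem)
      (x₁ := t.d₁ * Z.b₁₂ i i) (x₂ := -(t.d₁ * Z.b₁₁ i (i + 1)))
      (y₁ := t.d₂ * Z.b₂₂ i i) (y₂ := -(t.d₂ * Z.b₂₁ i (i + 1)))
      (by linear_combination (Z.b₁₂ i i ^ 2 + Z.b₁₁ i (i + 1) ^ 2) * ht.d₁_sq + hrow.norm₁
        - sq_eq_sq_of_mul_mul_eq ht.d₁_sq hs.e₁_sq hA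
        - sq_eq_sq_of_mul_mul_eq ht.d₁_sq hs.e₂_sq hR - cos t.θ ^ 2 * pφ - pθ)
      (by linear_combination (Z.b₂₂ i i ^ 2 + Z.b₂₁ i (i + 1) ^ 2) * ht.d₂_sq + hrow.norm₂
        - sq_eq_sq_of_mul_mul_eq ht.d₂_sq hs.e₁_sq hG
        - sq_eq_sq_of_mul_mul_eq ht.d₂_sq hs.e₂_sq hV - sin t.θ ^ 2 * pφ - pθ)
      (by linear_combination t.d₁ * t.d₂ * hrow.inner + sin t.θ * cos t.θ * pφ
        - mul_mul_eq_of_mul_mul_eq_right hs.e₁_sq hA hG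
        - mul_mul_eq_of_mul_mul_eq_right hs.e₂_sq hR hV)
  refine ⟨{ t with φ := φ, e₁ := f₂, e₂ := f₁ }, ⟨ht.θ_mem, hφ, ht.d₁_sq, ht.d₂_sq, hf₂, hf₁⟩,
    ⟨hA, hG, hR, hV⟩, ?_, ?_, ?_, ?_⟩ <;> dsimp only
  · linear_combination -h₁₁
  · linear_combination -h₂₁
  · linear_combination h₁₂
  · linear_combination h₂₂

lemma colPairRemainder_succ (ht : t.Valid) (hR : RightEqs Z t i)
    (hcol : ColPairOrthonormal Z i) : ColPairRemainder Z t (i + 1) := by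
  obtain ⟨hB, hH, hP, hU⟩ := hR
  have pθ := sin_sq_add_cos_sq t.θ
  have pφ := sin_sq_add_cos_sq t.φ
  rw [ColPairRemainder, add_sub_cancel_right]
  refine ⟨?_, ?_, ?_⟩
  · linear_combination hcol.norm₁ - sq_eq_sq_of_mul_mul_eq ht.d₁_sq ht.e₁_sq hB
      - sq_eq_sq_of_mul_mul_eq ht.d₂_sq ht.e₁_sq hH - sin t.φ ^ 2 * pθ - pφ
  · linear_combination hcol.norm₂ - sq_eq_sq_of_mul_mul_eq ht.d₁_sq ht.e₂_sq hP
      - sq_eq_sq_of_mul_mul_eq ht.d₂_sq ht.e₂_sq hU - cos t.φ ^ 2 * pθ - pφ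
  · linear_combination t.e₁ * t.e₂ * hcol.inner + sin t.φ * cos t.φ * pθ
      - mul_mul_eq_of_mul_mul_eq_left ht.d₁_sq hB hP - mul_mul_eq_of_mul_mul_eq_left ht.d₂_sq hH hU

lemma φ_eq_zero_of_rightEqs (ht : t.Valid) (hR : RightEqs Z t i)
    (h₁ : Z.b₁₁ i (i + 1) = 0) (h₂ : Z.b₂₁ i (i + 1) = 0) : t.φ = 0 := by
  obtain ⟨hB, hH, -, -⟩ := hR
  rw [h₁] at hB
  rw [h₂] at hH
  have hs : sin t.φ = 0 := by
    linear_combination sin t.θ * hB + cos t.θ * hH - sin t.φ * sin_sq_add_cos_sq t.θ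
  exact (sin_eq_zero_iff_of_lt_of_lt (by linarith [pi_pos, ht.φ_mem.1])
    (by linarith [pi_pos, ht.φ_mem.2])).1 hs

end Steps

variable {q : ℕ} {Z : IntBlocks}

lemma exists_stepData_of_le (hZ : OrthoRelations q Z) {n : ℕ} (hn : n ≤ q) :
    ∃ P : ℤ → StepData, (∀ i, (P i).Valid) ∧ (P (-1)).φ = 0 ∧
      (∀ m : ℕ, m < n → LeftEqs Z (P (m - 1)) (P m) m ∧ RightEqs Z (P m) m) ∧
      (n < q → ColPairRemainder Z (P (n - 1)) n) := by
  induction n with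
  | zero =>
    refine ⟨fun _ => ⟨0, 0, 1, 1, 1, 1⟩, fun _ => StepData.valid_init, rfl,
      fun m hm => absurd hm m.not_lt_zero, fun hq => ?_⟩
    simp [ColPairRemainder, hZ.col_zero hq, hZ.left_edge]
  | succ n ih =>
    obtain ⟨P, hP, hφ, hrows, hcol⟩ := ih (by omega)
    have hnq : n < q := by omega
    obtain ⟨t₀, ht₀, hL₀⟩ := exists_leftEqs (hP _) (hcol hnq)
    obtain ⟨t, ht, hL, hR⟩ := exists_rightEqs_of_leftEqs (hP _) ht₀ (hZ.row n hnq) hL₀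
    refine ⟨Function.update P n t, ?_, ?_, ?_, ?_⟩
    · intro i
      rcases eq_or_ne i n with rfl | hi
      · rwa [Function.update_self]
      · rw [Function.update_of_ne hi]; exact hP i
    · rw [Function.update_of_ne (by omega)]; exact hφ
    · intro m hm
      rw [Function.update_of_ne (by omega : (m : ℤ) - 1 ≠ n)]
      rcases Nat.lt_succ_iff_lt_or_eq.1 hm with hm | rfl
      · rw [Function.update_of_ne (by omega)]; exact hrows m hm
      · rw [Function.update_self]; exact ⟨hL, hR⟩
    · intro h
      push_cast
      rw [add_sub_cancel_right, Function.update_self]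
      exact colPairRemainder_succ ht hR (hZ.col n h)

lemma exists_stepData (hZ : OrthoRelations q Z) :
    ∃ P : ℤ → StepData, (∀ i, (P i).Valid) ∧ (P (-1)).φ = 0 ∧ (P (q - 1)).φ = 0 ∧
      ∀ m : ℕ, m < q → LeftEqs Z (P (m - 1)) (P m) m ∧ RightEqs Z (P m) m := by
  obtain ⟨P, hP, hφ, hrows, -⟩ := exists_stepData_of_le hZ le_rfl
  refine ⟨P, hP, hφ, ?_, hrows⟩
  rcases Nat.eq_zero_or_pos q with rfl | hq
  · simpa using hφ
  · have hR := (hrows (q - 1) (by omega)).2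
    rw [Nat.cast_sub hq, Nat.cast_one] at hR
    exact φ_eq_zero_of_rightEqs (hP _) hR (by rw [sub_add_cancel]; exact hZ.right_edge.1)
      (by rw [sub_add_cancel]; exact hZ.right_edge.2)

noncomputable def IntBlocks.ofBlocks (B₁₁ B₁₂ B₂₁ B₂₂ : Matrix (Fin q) (Fin q) ℝ) : IntBlocks :=
  ⟨zeroExt₂ B₁₁, zeroExt₂ B₁₂, zeroExt₂ B₂₁, zeroExt₂ B₂₂⟩

section OfBlocks

variable {B₁₁ B₁₂ B₂₁ B₂₂ : Matrix (Fin q) (Fin q) ℝ}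

lemma rowPairOrthonormal_ofBlocks (a : Fin q)
    (hrow : B₁₁ * B₁₁ᵀ + B₁₂ * B₁₂ᵀ = 1) (hrow' : B₂₁ * B₂₁ᵀ + B₂₂ * B₂₂ᵀ = 1)
    (hrow₁₂ : B₁₁ * B₂₁ᵀ + B₁₂ * B₂₂ᵀ = 0)
    (h11 : B₁₁.IsUpperBidiagonal_s4) (h21 : B₂₁.IsUpperBidiagonal_s4)
    (h12 : B₁₂.IsLowerBidiagonal_s4) (h22 : B₂₂.IsLowerBidiagonal_s4) :
    RowPairOrthonormal (.ofBlocks B₁₁ B₁₂ B₂₁ B₂₂) (a : ℕ) := by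
  have e₁ := congrFun₂ hrow a a
  have e₂ := congrFun₂ hrow' a a
  have e₁₂ := congrFun₂ hrow₁₂ a a
  simp only [Matrix.add_apply, mul_apply, transpose_apply, one_apply_eq, Matrix.zero_apply]
    at e₁ e₂ e₁₂
  rw [sum_mul_row_eq_zeroExt₂ _ _ _ _ a (fun m h₁ h₂ => h11 _ m (by omega)),
    sum_mul_row_eq_zeroExt₂ _ _ _ _ (a - 1) (fun m h₁ h₂ => h12 _ m (by omega))] at e₁ e₁₂
  rw [sum_mul_row_eq_zeroExt₂ _ _ _ _ a (fun m h₁ h₂ => h21 _ m (by omega)),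
    sum_mul_row_eq_zeroExt₂ _ _ _ _ (a - 1) (fun m h₁ h₂ => h22 _ m (by omega))] at e₂
  simp only [sub_add_cancel] at e₁ e₂ e₁₂
  refine ⟨?_, ?_, ?_⟩ <;> dsimp only [IntBlocks.ofBlocks]
  · linear_combination e₁
  · linear_combination e₂
  · linear_combination e₁₂

lemma colPairOrthonormal_ofBlocks (a b : Fin q) (hab : (b : ℕ) = a + 1)
    (hcol : B₁₁ᵀ * B₁₁ + B₂₁ᵀ * B₂₁ = 1) (hcol' : B₁₂ᵀ * B₁₂ + B₂₂ᵀ * B₂₂ = 1)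
    (hcol₁₂ : B₁₁ᵀ * B₁₂ + B₂₁ᵀ * B₂₂ = 0)
    (h11 : B₁₁.IsUpperBidiagonal_s4) (h21 : B₂₁.IsUpperBidiagonal_s4)
    (h12 : B₁₂.IsLowerBidiagonal_s4) (h22 : B₂₂.IsLowerBidiagonal_s4) :
    ColPairOrthonormal (.ofBlocks B₁₁ B₁₂ B₂₁ B₂₂) (a : ℕ) := by
  have e₁ := congrFun₂ hcol b b
  have e₂ := congrFun₂ hcol' a a
  have e₁₂ := congrFun₂ hcol₁₂ b a
  simp only [Matrix.add_apply, mul_apply, transpose_apply, one_apply_eq, Matrix.zero_apply]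
    at e₁ e₂ e₁₂
  rw [sum_mul_col_eq_zeroExt₂ _ _ _ _ a (fun m h₁ h₂ => h11 m _ (by omega)),
    sum_mul_col_eq_zeroExt₂ _ _ _ _ a (fun m h₁ h₂ => h21 m _ (by omega))] at e₁ e₁₂
  rw [sum_mul_col_eq_zeroExt₂ _ _ _ _ a (fun m h₁ h₂ => h12 m _ (by omega)),
    sum_mul_col_eq_zeroExt₂ _ _ _ _ a (fun m h₁ h₂ => h22 m _ (by omega))] at e₂
  rw [show ((b : ℕ) : ℤ) = (a : ℕ) + 1 by omega] at e₁ e₁₂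
  refine ⟨?_, ?_, ?_⟩ <;> dsimp only [IntBlocks.ofBlocks]
  · linear_combination e₁
  · linear_combination e₂
  · linear_combination e₁₂

lemma orthoRelations_ofBlocks
    (horth : fromBlocks B₁₁ B₁₂ B₂₁ B₂₂ ∈ orthogonalGroup (Fin q ⊕ Fin q) ℝ)
    (h11 : B₁₁.IsUpperBidiagonal_s4) (h21 : B₂₁.IsUpperBidiagonal_s4)
    (h12 : B₁₂.IsLowerBidiagonal_s4) (h22 : B₂₂.IsLowerBidiagonal_s4) :
    OrthoRelations q (.ofBlocks B₁₁ B₁₂ B₂₁ B₂₂) := by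
  have hrow := (mem_orthogonalGroup_iff _ _).1 horth
  have hcol := (mem_orthogonalGroup_iff' _ _).1 horth
  rw [fromBlocks_transpose, fromBlocks_multiply, ← fromBlocks_one, fromBlocks_inj] at hrow hcol
  obtain ⟨r₁, r₁₂, -, r₂⟩ := hrow
  obtain ⟨c₁, c₁₂, -, c₂⟩ := hcol
  refine ⟨fun n hn => rowPairOrthonormal_ofBlocks ⟨n, hn⟩ r₁ r₂ r₁₂ h11 h21 h12 h22,
    fun n hn => colPairOrthonormal_ofBlocks ⟨n, by omega⟩ ⟨n + 1, hn⟩ rfl c₁ c₂ c₁₂ h11 h21 h12 h22,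
    fun hq => ?_, ?_, ?_⟩
  · have e := congrFun₂ c₁ ⟨0, hq⟩ ⟨0, hq⟩
    simp only [Matrix.add_apply, mul_apply, transpose_apply, one_apply_eq] at e
    rw [sum_mul_col_eq_zeroExt₂ _ _ _ _ (-1) (fun m h₁ h₂ => h11 m _ (by simp; omega)),
      sum_mul_col_eq_zeroExt₂ _ _ _ _ (-1) (fun m h₁ h₂ => h21 m _ (by simp; omega))] at e
    have hz : ∀ M : Matrix (Fin q) (Fin q) ℝ, zeroExt₂ M (-1) 0 = 0 :=
      fun M => zeroExt₂_eq_zero M (by omega)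
    simp only [Nat.cast_zero, neg_add_cancel, hz, mul_zero, zero_add] at e
    dsimp only [IntBlocks.ofBlocks]
    linear_combination e
  · exact ⟨zeroExt₂_eq_zero _ (by omega), zeroExt₂_eq_zero _ (by omega)⟩
  · exact ⟨zeroExt₂_eq_zero _ (by omega), zeroExt₂_eq_zero _ (by omega)⟩

end OfBlocks

lemma diagonal_mul_mul_diagonal_eq_bdbB11 {B : Matrix (Fin q) (Fin q) ℝ} (hB : B.IsUpperBidiagonal_s4)
    {P : ℤ → StepData} (hφ : (P (-1)).φ = 0)
    (hdiag : ∀ i : Fin q,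
      (P i).d₁ * zeroExt₂ B i i * (P (i - 1)).e₁ = cos (P i).θ * cos (P (i - 1)).φ)
    (hsup : ∀ i : Fin q,
      (P i).d₁ * zeroExt₂ B i (i + 1) * (P i).e₁ = -(sin (P i).θ * sin (P i).φ)) :
    diagonal (fun i : Fin q => (P i).d₁) * B * diagonal (fun j : Fin q => (P (j - 1)).e₁) =
      bdbB11 q (fun i => (P i).θ) (fun k => (P k).φ) := by
  ext i j
  rw [mul_diagonal, diagonal_mul, bdbB11]
  split_ifs with hji hi hji'
  · obtain rfl : i = j := (Fin.ext hji).symm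
    have h := hdiag i
    rw [zeroExt₂_coe_left, zeroExt_coe] at h
    simpa [Nat.cast_sub hi] using h
  · obtain rfl : i = j := (Fin.ext hji).symm
    have h := hdiag i
    have hi0 : ((i : ℕ) : ℤ) = 0 := by omega
    rw [zeroExt₂_coe_left, zeroExt_coe] at h
    simpa [hi0, hφ] using h
  · have hj : ((j : ℕ) : ℤ) = (i : ℕ) + 1 := by omega
    have h := hsup i
    rw [zeroExt₂_coe_left, ← hj, zeroExt_coe] at h
    simpa [hj] using h
  · rw [hB i j (by omega), mul_zero, zero_mul]

lemma diagonal_mul_mul_diagonal_eq_bdbB21 {B : Matrix (Fin q) (Fin q) ℝ} (hB : B.IsUpperBidiagonal_s4)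
    {P : ℤ → StepData} (hφ : (P (-1)).φ = 0)
    (hdiag : ∀ i : Fin q,
      (P i).d₂ * zeroExt₂ B i i * (P (i - 1)).e₁ = -(sin (P i).θ * cos (P (i - 1)).φ))
    (hsup : ∀ i : Fin q,
      (P i).d₂ * zeroExt₂ B i (i + 1) * (P i).e₁ = -(cos (P i).θ * sin (P i).φ)) :
    diagonal (fun i : Fin q => (P i).d₂) * B * diagonal (fun j : Fin q => (P (j - 1)).e₁) =
      bdbB21 q (fun i => (P i).θ) (fun k => (P k).φ) := by
  ext i j
  rw [mul_diagonal, diagonal_mul, bdbB21]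
  split_ifs with hji hi hji'
  · obtain rfl : i = j := (Fin.ext hji).symm
    have h := hdiag i
    rw [zeroExt₂_coe_left, zeroExt_coe] at h
    simpa [Nat.cast_sub hi] using h
  · obtain rfl : i = j := (Fin.ext hji).symm
    have h := hdiag i
    have hi0 : ((i : ℕ) : ℤ) = 0 := by omega
    rw [zeroExt₂_coe_left, zeroExt_coe] at h
    simpa [hi0, hφ] using h
  · have hj : ((j : ℕ) : ℤ) = (i : ℕ) + 1 := by omega
    have h := hsup i
    rw [zeroExt₂_coe_left, ← hj, zeroExt_coe] at h
    simpa [hj] using h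
  · rw [hB i j (by omega), mul_zero, zero_mul]

lemma diagonal_mul_mul_diagonal_eq_bdbB12 {B : Matrix (Fin q) (Fin q) ℝ} (hB : B.IsLowerBidiagonal_s4)
    {P : ℤ → StepData} (hφ : (P (q - 1)).φ = 0)
    (hdiag : ∀ i : Fin q,
      (P i).d₁ * zeroExt₂ B i i * (P i).e₂ = sin (P i).θ * cos (P i).φ)
    (hsub : ∀ i : Fin q,
      (P i).d₁ * zeroExt₂ B i (i - 1) * (P (i - 1)).e₂ = cos (P i).θ * sin (P (i - 1)).φ) :
    diagonal (fun i : Fin q => (P i).d₁) * B * diagonal (fun j : Fin q => (P j).e₂) =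
      bdbB12 q (fun i => (P i).θ) (fun k => (P k).φ) := by
  ext i j
  rw [mul_diagonal, diagonal_mul, bdbB12]
  split_ifs with hji hi hij
  · obtain rfl : i = j := (Fin.ext hji).symm
    have h := hdiag i
    rw [zeroExt₂_coe_left, zeroExt_coe] at h
    simpa using h
  · obtain rfl : i = j := (Fin.ext hji).symm
    have h := hdiag i
    have hiq : ((i : ℕ) : ℤ) = q - 1 := by omega
    rw [zeroExt₂_coe_left, zeroExt_coe] at h
    simpa [hiq, hφ] using h
  · have hj : ((j : ℕ) : ℤ) = (i : ℕ) - 1 := by omega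
    have h := hsub i
    rw [zeroExt₂_coe_left, ← hj, zeroExt_coe] at h
    simpa using h
  · rw [hB i j (by omega), mul_zero, zero_mul]

lemma diagonal_mul_mul_diagonal_eq_bdbB22 {B : Matrix (Fin q) (Fin q) ℝ} (hB : B.IsLowerBidiagonal_s4)
    {P : ℤ → StepData} (hφ : (P (q - 1)).φ = 0)
    (hdiag : ∀ i : Fin q,
      (P i).d₂ * zeroExt₂ B i i * (P i).e₂ = cos (P i).θ * cos (P i).φ)
    (hsub : ∀ i : Fin q,
      (P i).d₂ * zeroExt₂ B i (i - 1) * (P (i - 1)).e₂ = -(sin (P i).θ * sin (P (i - 1)).φ)) :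
    diagonal (fun i : Fin q => (P i).d₂) * B * diagonal (fun j : Fin q => (P j).e₂) =
      bdbB22 q (fun i => (P i).θ) (fun k => (P k).φ) := by
  ext i j
  rw [mul_diagonal, diagonal_mul, bdbB22]
  split_ifs with hji hi hij
  · obtain rfl : i = j := (Fin.ext hji).symm
    have h := hdiag i
    rw [zeroExt₂_coe_left, zeroExt_coe] at h
    simpa using h
  · obtain rfl : i = j := (Fin.ext hji).symm
    have h := hdiag i
    have hiq : ((i : ℕ) : ℤ) = q - 1 := by omega
    rw [zeroExt₂_coe_left, zeroExt_coe] at h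
    simpa [hiq, hφ] using h
  · have hj : ((j : ℕ) : ℤ) = (i : ℕ) - 1 := by omega
    have h := hsub i
    rw [zeroExt₂_coe_left, ← hj, zeroExt_coe] at h
    simpa using h
  · rw [hB i j (by omega), mul_zero, zero_mul]

end BidiagonalBlockForm

open BidiagonalBlockForm

theorem bdb_up_to_signs_general (q : ℕ)
    (B₁₁ B₁₂ B₂₁ B₂₂ : Matrix (Fin q) (Fin q) ℝ)
    (horth : Matrix.fromBlocks B₁₁ B₁₂ B₂₁ B₂₂ ∈ Matrix.orthogonalGroup (Fin q ⊕ Fin q) ℝ)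
    (h11 : ∀ i j : Fin q, ¬(j.val = i.val ∨ j.val = i.val + 1) → B₁₁ i j = 0)
    (h21 : ∀ i j : Fin q, ¬(j.val = i.val ∨ j.val = i.val + 1) → B₂₁ i j = 0)
    (h12 : ∀ i j : Fin q, ¬(j.val = i.val ∨ i.val = j.val + 1) → B₁₂ i j = 0)
    (h22 : ∀ i j : Fin q, ¬(j.val = i.val ∨ i.val = j.val + 1) → B₂₂ i j = 0) :
    ∃ (D₁ D₂ E₁ E₂ : Fin q → ℝ) (θ : Fin q → ℝ) (φ : Fin (q - 1) → ℝ),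
      (∀ i, D₁ i = 1 ∨ D₁ i = -1) ∧ (∀ i, D₂ i = 1 ∨ D₂ i = -1) ∧
      (∀ i, E₁ i = 1 ∨ E₁ i = -1) ∧ (∀ i, E₂ i = 1 ∨ E₂ i = -1) ∧
      (∀ i, θ i ∈ Set.Icc 0 (Real.pi / 2)) ∧
      (∀ i, φ i ∈ Set.Icc 0 (Real.pi / 2)) ∧
      Matrix.fromBlocks (Matrix.diagonal D₁) 0 0 (Matrix.diagonal D₂) *
          Matrix.fromBlocks B₁₁ B₁₂ B₂₁ B₂₂ *
          Matrix.fromBlocks (Matrix.diagonal E₁) 0 0 (Matrix.diagonal E₂) =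
        Matrix.fromBlocks (bdbB11 q θ φ) (bdbB12 q θ φ) (bdbB21 q θ φ) (bdbB22 q θ φ) := by
  obtain ⟨P, hP, hφ₀, hφq, hrows⟩ := exists_stepData (orthoRelations_ofBlocks horth h11 h21 h12 h22)
  have hL := fun i : Fin q => (hrows i i.isLt).1
  have hR := fun i : Fin q => (hrows i i.isLt).2
  refine ⟨fun i => (P i).d₁, fun i => (P i).d₂, fun j => (P (j - 1)).e₁, fun j => (P j).e₂,
    fun i => (P i).θ, fun k => (P k).φ, fun _ => sq_eq_one_iff.1 (hP _).d₁_sq,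
    fun _ => sq_eq_one_iff.1 (hP _).d₂_sq, fun _ => sq_eq_one_iff.1 (hP _).e₁_sq,
    fun _ => sq_eq_one_iff.1 (hP _).e₂_sq, fun _ => (hP _).θ_mem, fun _ => (hP _).φ_mem, ?_⟩
  simp only [fromBlocks_multiply, Matrix.zero_mul, Matrix.mul_zero, add_zero, zero_add]
  rw [fromBlocks_inj]
  exact ⟨diagonal_mul_mul_diagonal_eq_bdbB11 h11 hφ₀ (fun i => (hL i).1) (fun i => (hR i).1),
    diagonal_mul_mul_diagonal_eq_bdbB12 h12 hφq (fun i => (hR i).2.2.1) (fun i => (hL i).2.2.1),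
    diagonal_mul_mul_diagonal_eq_bdbB21 h21 hφ₀ (fun i => (hL i).2.1) (fun i => (hR i).2.1),
    diagonal_mul_mul_diagonal_eq_bdbB22 h22 hφq (fun i => (hR i).2.2.2) (fun i => (hL i).2.2.2)⟩

/-- Any orthogonal matrix whose blocks are bidiagonal (upper, lower, upper, lower)
can be brought to bidiagonal block form by pre- and post-multiplication by
diagonal signature matrices. -/
theorem bdb_up_to_signs (q : ℕ) (hq : 1 ≤ q)
    (B₁₁ B₁₂ B₂₁ B₂₂ : Matrix (Fin q) (Fin q) ℝ)
    (horth : Matrix.fromBlocks B₁₁ B₁₂ B₂₁ B₂₂ ∈ Matrix.orthogonalGroup (Fin q ⊕ Fin q) ℝ)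
    (h11 : ∀ i j : Fin q, ¬(j.val = i.val ∨ j.val = i.val + 1) → B₁₁ i j = 0)
    (h21 : ∀ i j : Fin q, ¬(j.val = i.val ∨ j.val = i.val + 1) → B₂₁ i j = 0)
    (h12 : ∀ i j : Fin q, ¬(j.val = i.val ∨ i.val = j.val + 1) → B₁₂ i j = 0)
    (h22 : ∀ i j : Fin q, ¬(j.val = i.val ∨ i.val = j.val + 1) → B₂₂ i j = 0) :
    ∃ (D₁ D₂ E₁ E₂ : Fin q → ℝ) (θ : Fin q → ℝ) (φ : Fin (q - 1) → ℝ),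
      (∀ i, D₁ i = 1 ∨ D₁ i = -1) ∧ (∀ i, D₂ i = 1 ∨ D₂ i = -1) ∧
      (∀ i, E₁ i = 1 ∨ E₁ i = -1) ∧ (∀ i, E₂ i = 1 ∨ E₂ i = -1) ∧
      (∀ i, θ i ∈ Set.Icc 0 (Real.pi / 2)) ∧
      (∀ i, φ i ∈ Set.Icc 0 (Real.pi / 2)) ∧
      Matrix.fromBlocks (Matrix.diagonal D₁) 0 0 (Matrix.diagonal D₂) *
          Matrix.fromBlocks B₁₁ B₁₂ B₂₁ B₂₂ *
          Matrix.fromBlocks (Matrix.diagonal E₁) 0 0 (Matrix.diagonal E₂) =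
        Matrix.fromBlocks (bdbB11 q θ φ) (bdbB12 q θ φ) (bdbB21 q θ φ) (bdbB22 q θ φ) :=
  bdb_up_to_signs_general q B₁₁ B₁₂ B₂₁ B₂₂ horth h11 h21 h12 h22
end

section
/- Let A be an m-by-m real symmetric tridiagonal matrix and let λ ∈ ℝ be an eigenvalue of A. Then there exist an m-by-m real orthogonal matrix Q and an m-by-m upper triangular matrix R whose last row is entirely zero such that A − λI = QR. -/
/-! `A - λI` is singular, so some unit vector `w` is orthogonal to all of its columns `bⱼ`.
Gram–Schmidt applied to `w, b₀, …, b_{m-2}`, with `w` then moved to the end, gives an orthonormal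
basis `q₀, …, q_{m-1} = w` with `bⱼ ∈ span (w, q₀, …, qⱼ)` for `j < m - 1`. Hence `R = Qᴴ (A - λI)`
is upper triangular, and its last row `wᴴ (A - λI)` vanishes. -/

open Matrix InnerProductSpace

section GramSchmidt

variable {𝕜 E : Type*} [RCLike 𝕜] [NormedAddCommGroup E] [InnerProductSpace 𝕜 E]
  [FiniteDimensional 𝕜 E]

theorem exists_orthonormalBasis_last_eq_inner_castSucc_eq_zero {n : ℕ}
    (hn : Module.finrank 𝕜 E = n + 1) {w : E} (hw : ‖w‖ = 1) (v : Fin n → E) :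
    ∃ e : OrthonormalBasis (Fin (n + 1)) 𝕜 E, e (Fin.last n) = w ∧
      ∀ i j : Fin n, j < i → ⟪e i.castSucc, v j⟫_𝕜 = 0 := by
  set f : Fin (n + 1) → E := Fin.cons w v
  set g := gramSchmidtOrthonormalBasis (hn.trans (Fintype.card_fin _).symm) f
  have hg : g 0 = w := by
    have hnormed : gramSchmidtNormed 𝕜 f 0 = w := by
      rw [gramSchmidtNormed, ← bot_eq_zero, gramSchmidt_bot, bot_eq_zero]
      simp [f, hw]
    rw [gramSchmidtOrthonormalBasis_apply _ (hnormed ▸ norm_ne_zero_iff.mp (hw ▸ one_ne_zero)),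
      hnormed]
  refine ⟨g.reindex (finRotate (n + 1)).symm, ?_, fun i j hji => ?_⟩
  · simp [hg]
  · simpa [finRotate_apply, Fin.coeSucc_eq_succ, f] using
      gramSchmidtOrthonormalBasis_inv_triangular _ f (Fin.succ_lt_succ_iff.mpr hji)

end GramSchmidt

theorem OrthonormalBasis.conjTranspose_toMatrix_mul_apply {𝕜 ι : Type*} [RCLike 𝕜] [Fintype ι]
    [DecidableEq ι] (e : OrthonormalBasis ι 𝕜 (EuclideanSpace 𝕜 ι)) (B : Matrix ι ι 𝕜) (i j : ι) :
    (((EuclideanSpace.basisFun ι 𝕜).toBasis.toMatrix e.toBasis)ᴴ * B) i j =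
      ⟪e i, WithLp.toLp 2 (fun k => B k j)⟫_𝕜 := by
  simp [mul_apply, EuclideanSpace.inner_eq_star_dotProduct, dotProduct,
    Module.Basis.toMatrix_apply, mul_comm]

theorem Matrix.exists_qr_lastRow_eq_zero_of_det_eq_zero {𝕜 : Type*} [RCLike 𝕜] {n : ℕ}
    {B : Matrix (Fin (n + 1)) (Fin (n + 1)) 𝕜} (hB : B.det = 0) :
    ∃ Q R : Matrix (Fin (n + 1)) (Fin (n + 1)) 𝕜, Q ∈ unitaryGroup (Fin (n + 1)) 𝕜 ∧
      R.BlockTriangular id ∧ R (Fin.last n) = 0 ∧ B = Q * R := by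
  obtain ⟨y, hy, hyB⟩ := exists_vecMul_eq_zero_iff.mpr hB
  set x : EuclideanSpace 𝕜 (Fin (n + 1)) := WithLp.toLp 2 (star y)
  have hx : x ≠ 0 := by simpa [x] using hy
  have hxB (j) : ⟪x, WithLp.toLp 2 (fun k => B k j)⟫_𝕜 = 0 := by
    simpa [x, EuclideanSpace.inner_eq_star_dotProduct, vecMul, dotProduct_comm] using
      congrFun hyB j
  obtain ⟨e, he_last, he_tri⟩ := exists_orthonormalBasis_last_eq_inner_castSucc_eq_zero
    finrank_euclideanSpace_fin (norm_smul_inv_norm (𝕜 := 𝕜) hx)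
    (fun j : Fin n => WithLp.toLp 2 (fun k => B k j.castSucc))
  set Q := (EuclideanSpace.basisFun (Fin (n + 1)) 𝕜).toBasis.toMatrix e.toBasis
  have hQ : Q ∈ unitaryGroup (Fin (n + 1)) 𝕜 :=
    (EuclideanSpace.basisFun _ 𝕜).toMatrix_orthonormalBasis_mem_unitary e
  have hR_last : (Qᴴ * B) (Fin.last n) = 0 := by
    ext j
    rw [e.conjTranspose_toMatrix_mul_apply, he_last, inner_smul_left, hxB, mul_zero, Pi.zero_apply]
  refine ⟨Q, Qᴴ * B, hQ, fun i j hji => ?_, hR_last, ?_⟩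
  · induction i using Fin.lastCases with
    | last => rw [hR_last, Pi.zero_apply]
    | cast i =>
      obtain ⟨j, rfl⟩ := Fin.exists_castSucc_eq.mpr (Fin.ne_last_of_lt hji)
      rw [e.conjTranspose_toMatrix_mul_apply]
      exact he_tri i j (Fin.castSucc_lt_castSucc_iff.mp hji)
  · rw [← mul_assoc, ← star_eq_conjTranspose, mem_unitaryGroup_iff.mp hQ, one_mul]

theorem eigenvalue_qr_zero_last_row_general (m : ℕ) (A : Matrix (Fin m) (Fin m) ℝ) (lam : ℝ)
    (heig : ∃ v : Fin m → ℝ, v ≠ 0 ∧ A.mulVec v = lam • v) :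
    ∃ Q R : Matrix (Fin m) (Fin m) ℝ,
      Q ∈ Matrix.orthogonalGroup (Fin m) ℝ ∧
      (∀ i j : Fin m, j.val < i.val → R i j = 0) ∧
      (∀ i j : Fin m, i.val = m - 1 → R i j = 0) ∧
      A - lam • (1 : Matrix (Fin m) (Fin m) ℝ) = Q * R := by
  obtain ⟨v, hv, hAv⟩ := heig
  cases m with
  | zero => exact absurd (Subsingleton.elim v 0) hv
  | succ n =>
    have hdet : (A - lam • (1 : Matrix (Fin (n + 1)) (Fin (n + 1)) ℝ)).det = 0 :=
      exists_mulVec_eq_zero_iff.mp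
        ⟨v, hv, by rw [sub_mulVec, hAv, smul_mulVec, one_mulVec, sub_self]⟩
    obtain ⟨Q, R, hQ, hR_tri, hR_last, hQR⟩ := exists_qr_lastRow_eq_zero_of_det_eq_zero hdet
    refine ⟨Q, R, hQ, fun _ _ hji => hR_tri hji, fun i _ hi => ?_, hQR⟩
    rw [show i = Fin.last n from Fin.ext hi, hR_last, Pi.zero_apply]

/-- If `λ` is an eigenvalue of a real symmetric tridiagonal matrix `A`, then
`A − λI` admits a QR factorization whose upper triangular factor has an
all-zero last row. -/
theorem eigenvalue_qr_zero_last_row (m : ℕ) (A : Matrix (Fin m) (Fin m) ℝ) (lam : ℝ)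
    (hsymm : A.IsSymm)
    (htri : ∀ i j : Fin m, i.val + 1 < j.val ∨ j.val + 1 < i.val → A i j = 0)
    (heig : ∃ v : Fin m → ℝ, v ≠ 0 ∧ A.mulVec v = lam • v) :
    ∃ Q R : Matrix (Fin m) (Fin m) ℝ,
      Q ∈ Matrix.orthogonalGroup (Fin m) ℝ ∧
      (∀ i j : Fin m, j.val < i.val → R i j = 0) ∧
      (∀ i j : Fin m, i.val = m - 1 → R i j = 0) ∧
      A - lam • (1 : Matrix (Fin m) (Fin m) ℝ) = Q * R :=
  eigenvalue_qr_zero_last_row_general m A lam heig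
end

section
/- For m ≥ 2 and j ∈ {1, …, m−1}, let G_j(ψ) denote the m-by-m Givens rotation that agrees with the identity matrix except in rows and columns j and j+1, where its 2-by-2 principal submatrix is [[cos ψ, −sin ψ], [sin ψ, cos ψ]]. Then the map from [0, π)^{m−1} to m-by-m real matrices given by (ψ₁, …, ψ_{m−1}) ↦ G₁(ψ₁) · G₂(ψ₂) ⋯ G_{m−1}(ψ_{m−1}) is injective; that is, the expression of a matrix as such a product of Givens rotations with angles in [0, π) is unique. -/
open Matrix

/-- The `m × m` Givens rotation acting in the plane of coordinates `j` and `j+1`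
(0-based) with angle `ψ`: it agrees with the identity except that its entries in
rows and columns `j, j+1` form the 2×2 rotation `[[cos ψ, −sin ψ], [sin ψ, cos ψ]]`. -/
noncomputable def givensRot (m : ℕ) (j : Fin (m - 1)) (ψ : ℝ) :
    Matrix (Fin m) (Fin m) ℝ :=
  fun a b =>
    if a.val = j.val ∧ b.val = j.val then Real.cos ψ
    else if a.val = j.val ∧ b.val = j.val + 1 then -Real.sin ψ
    else if a.val = j.val + 1 ∧ b.val = j.val then Real.sin ψ
    else if a.val = j.val + 1 ∧ b.val = j.val + 1 then Real.cos ψ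
    else if a = b then 1 else 0

/-!
Write the product as `G_j(ψ_j) · Q`, where `Q` is a product of rotations in planes of larger
index. Such a `Q` fixes the basis vector `e_j`, so the `(j, j)` entry of the product is
`cos ψ_j`, which determines `ψ_j ∈ [0, π)`. Since `G_j(-ψ) G_j(ψ) = 1`, the factor `G_j(ψ_j)`
can then be cancelled and the remaining angles are determined in the same way.
-/

open Real

section PlaneRotation

variable {R : Type*} [Ring R] [Algebra ℝ R]

/-- Rotation through `ψ` in the plane onto which the idempotent `P` projects, `J` being the
quarter turn of that plane (`P * J = J * P = J`, `J * J = -P`). -/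
noncomputable def planeRotation (P J : R) (ψ : ℝ) : R :=
  1 + (cos ψ - 1) • P + sin ψ • J

variable {P J : R}

theorem planeRotation_zero : planeRotation P J 0 = 1 := by
  simp [planeRotation]

theorem planeRotation_add (hPP : P * P = P) (hPJ : P * J = J) (hJP : J * P = J)
    (hJJ : J * J = -P) (ψ φ : ℝ) :
    planeRotation P J (ψ + φ) = planeRotation P J ψ * planeRotation P J φ := by
  simp only [planeRotation, add_mul, mul_add, mul_one, one_mul, smul_mul_assoc, mul_smul_comm,
    hPP, hPJ, hJP, hJJ, smul_neg, cos_add, sin_add]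
  module

end PlaneRotation

theorem Matrix.mul_apply_of_col_eq_one {n α : Type*} [Fintype n] [DecidableEq n]
    [NonAssocSemiring α] {M N : Matrix n n α} {k : n}
    (hN : ∀ c, N c k = (1 : Matrix n n α) c k) (a : n) :
    (M * N) a k = M a k := by
  simp [mul_apply, hN, one_apply]

namespace givensRot

variable {m : ℕ}

/-- The coordinates `j` and `j + 1` of `Fin m` mixed by `givensRot m j`. -/
def fst (j : Fin (m - 1)) : Fin m := Fin.castLE (Nat.sub_le m 1) j

def snd (j : Fin (m - 1)) : Fin m := ⟨j + 1, Nat.add_lt_of_lt_sub j.isLt⟩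

theorem fst_ne_snd (j : Fin (m - 1)) : fst j ≠ snd j := by
  simp [fst, snd, Fin.ext_iff]

def proj (j : Fin (m - 1)) : Matrix (Fin m) (Fin m) ℝ :=
  single (fst j) (fst j) 1 + single (snd j) (snd j) 1

def quarterTurn (j : Fin (m - 1)) : Matrix (Fin m) (Fin m) ℝ :=
  single (snd j) (fst j) 1 - single (fst j) (snd j) 1

end givensRot

open givensRot

section GivensRot

variable {m : ℕ}

theorem givensRot_eq_planeRotation (j : Fin (m - 1)) (ψ : ℝ) :
    givensRot m j ψ = planeRotation (proj j) (quarterTurn j) ψ := by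
  ext a b
  simp only [givensRot, planeRotation, proj, quarterTurn, fst, snd, Matrix.add_apply,
    Matrix.smul_apply, Matrix.sub_apply, one_apply, single, of_apply, smul_eq_mul, Fin.ext_iff,
    Fin.val_castLE]
  split_ifs <;> first | omega | ring

theorem givensRot_add (j : Fin (m - 1)) (ψ φ : ℝ) :
    givensRot m j (ψ + φ) = givensRot m j ψ * givensRot m j φ := by
  have hne := fst_ne_snd j
  simp only [givensRot_eq_planeRotation]
  apply planeRotation_add <;>
    simp [proj, quarterTurn, add_mul, mul_add, sub_mul, mul_sub, single_mul_single_same,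
      single_mul_single_of_ne _ _ _ _ hne, single_mul_single_of_ne _ _ _ _ hne.symm] <;>
    abel

theorem givensRot_neg_mul_self (j : Fin (m - 1)) (ψ : ℝ) :
    givensRot m j (-ψ) * givensRot m j ψ = 1 := by
  rw [← givensRot_add, neg_add_cancel, givensRot_eq_planeRotation, planeRotation_zero]

theorem givensRot_apply_of_lt (j : Fin (m - 1)) (ψ : ℝ) (a : Fin m) {b : Fin m}
    (hb : b.val < j.val) :
    givensRot m j ψ a b = (1 : Matrix (Fin m) (Fin m) ℝ) a b := by
  simp only [givensRot, one_apply, Fin.ext_iff]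
  split_ifs <;> first | rfl | omega

theorem givensRot_apply_fst_fst (j : Fin (m - 1)) (ψ : ℝ) :
    givensRot m j ψ (fst j) (fst j) = cos ψ := by
  simp [givensRot, fst]

theorem prod_givensRot_apply_of_lt (ψ : Fin (m - 1) → ℝ) {L : List (Fin (m - 1))}
    {k : Fin m} (hL : ∀ i ∈ L, k.val < i.val) (a : Fin m) :
    (L.map fun i => givensRot m i (ψ i)).prod a k = (1 : Matrix (Fin m) (Fin m) ℝ) a k := by
  induction L generalizing a with
  | nil => rfl
  | cons j L ih =>
    rw [List.map_cons, List.prod_cons,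
      mul_apply_of_col_eq_one (ih fun i hi => hL i (List.mem_cons_of_mem j hi))]
    exact givensRot_apply_of_lt j (ψ j) a (hL j List.mem_cons_self)

theorem eq_of_prod_givensRot_eq {ψ ψ' : Fin (m - 1) → ℝ} {L : List (Fin (m - 1))}
    (hL : L.Pairwise (· < ·)) (hψ : ∀ i ∈ L, ψ i ∈ Set.Icc 0 π)
    (hψ' : ∀ i ∈ L, ψ' i ∈ Set.Icc 0 π)
    (h : (L.map fun i => givensRot m i (ψ i)).prod =
      (L.map fun i => givensRot m i (ψ' i)).prod) :
    ∀ i ∈ L, ψ i = ψ' i := by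
  induction L with
  | nil => simp
  | cons j L ih =>
    obtain ⟨hj, hL⟩ := List.pairwise_cons.mp hL
    simp only [List.map_cons, List.prod_cons] at h
    have diag (φ : Fin (m - 1) → ℝ) :
        (givensRot m j (φ j) * (L.map fun i => givensRot m i (φ i)).prod) (fst j) (fst j) =
          cos (φ j) := by
      rw [mul_apply_of_col_eq_one (prod_givensRot_apply_of_lt φ hj), givensRot_apply_fst_fst]
    have hjj : ψ j = ψ' j := injOn_cos (hψ j List.mem_cons_self) (hψ' j List.mem_cons_self)
      (by rw [← diag, ← diag, h])
    have htail : (L.map fun i => givensRot m i (ψ i)).prod =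
        (L.map fun i => givensRot m i (ψ' i)).prod := by
      simpa [← mul_assoc, hjj, givensRot_neg_mul_self] using
        congrArg (givensRot m j (-ψ' j) * ·) h
    intro i hi
    rcases List.mem_cons.mp hi with rfl | hi
    · exact hjj
    · exact ih hL (fun i hi => hψ i (List.mem_cons_of_mem j hi))
        (fun i hi => hψ' i (List.mem_cons_of_mem j hi)) htail i hi

end GivensRot

theorem givens_product_injective_general (m : ℕ)
    (ψ ψ' : Fin (m - 1) → ℝ)
    (hψ : ∀ j, ψ j ∈ Set.Ico 0 Real.pi)
    (hψ' : ∀ j, ψ' j ∈ Set.Ico 0 Real.pi)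
    (h : ((List.finRange (m - 1)).map fun j => givensRot m j (ψ j)).prod =
        ((List.finRange (m - 1)).map fun j => givensRot m j (ψ' j)).prod) :
    ψ = ψ' := by
  funext j
  exact eq_of_prod_givensRot_eq (List.pairwise_lt_finRange (m - 1))
    (fun i _ => Set.Ico_subset_Icc_self (hψ i)) (fun i _ => Set.Ico_subset_Icc_self (hψ' i))
    h j (List.mem_finRange j)

/-- The expression of a matrix as an ordered product
`G₁(ψ₁) · G₂(ψ₂) ⋯ G_{m−1}(ψ_{m−1})` of Givens rotations, where `G_j` rotates
coordinates `j` and `j+1` through an angle `ψ_j ∈ [0, π)`, is unique. -/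
theorem givens_product_injective (m : ℕ) (hm : 2 ≤ m)
    (ψ ψ' : Fin (m - 1) → ℝ)
    (hψ : ∀ j, ψ j ∈ Set.Ico 0 Real.pi)
    (hψ' : ∀ j, ψ' j ∈ Set.Ico 0 Real.pi)
    (h : ((List.finRange (m - 1)).map fun j => givensRot m j (ψ j)).prod =
        ((List.finRange (m - 1)).map fun j => givensRot m j (ψ' j)).prod) :
    ψ = ψ' :=
  givens_product_injective_general m ψ ψ' hψ hψ' h
end

section
/- Let B be an m-by-m real matrix, σ ∈ ℝ, and let S and T be m-by-m real orthogonal matrices and L, R be m-by-m real matrices such that BBᵀ − σ²I = S·Lᵀ and BᵀB − σ²I = T·R. Define B̄ = Sᵀ B T. Then B̄B̄ᵀ = LᵀS + σ²I and B̄ᵀB̄ = RT + σ²I; that is, the SVD step on B implicitly performs QR steps with shift σ² on both BBᵀ and BᵀB. -/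
open Matrix

/-- A shifted QR step `a - c = q r ↦ r q + c` is the similarity `a ↦ p a q` by a left inverse `p`
of `q`. -/
theorem mul_mul_eq_mul_add_smul_one_of_sub_smul_one_eq_mul {K A : Type*} [CommSemiring K] [Ring A]
    [Algebra K A] {p q a r : A} {c : K} (hpq : p * q = 1) (h : a - c • 1 = q * r) :
    p * a * q = r * q + c • 1 := by
  rw [sub_eq_iff_eq_add.mp h, mul_add, add_mul, ← mul_assoc, hpq, one_mul,
    mul_smul_one, smul_mul_assoc, hpq]

/-- An SVD step on `B` implicitly computes QR steps for `BBᵀ` and `BᵀB`: if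
`BBᵀ − σ²I = S·Lᵀ` and `BᵀB − σ²I = T·R` with `S`, `T` orthogonal, then
`B̄ = SᵀBT` satisfies `B̄B̄ᵀ = LᵀS + σ²I` and `B̄ᵀB̄ = RT + σ²I`. -/
theorem svd_step_implicit_qr (m : ℕ) (B L R S T : Matrix (Fin m) (Fin m) ℝ) (σ : ℝ)
    (hS : S ∈ Matrix.orthogonalGroup (Fin m) ℝ)
    (hT : T ∈ Matrix.orthogonalGroup (Fin m) ℝ)
    (hleft : B * Bᵀ - σ ^ 2 • (1 : Matrix (Fin m) (Fin m) ℝ) = S * Lᵀ)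
    (hright : Bᵀ * B - σ ^ 2 • (1 : Matrix (Fin m) (Fin m) ℝ) = T * R) :
    (Sᵀ * B * T) * (Sᵀ * B * T)ᵀ = Lᵀ * S + σ ^ 2 • (1 : Matrix (Fin m) (Fin m) ℝ) ∧
    (Sᵀ * B * T)ᵀ * (Sᵀ * B * T) = R * T + σ ^ 2 • (1 : Matrix (Fin m) (Fin m) ℝ) := by
  have hSS : Sᵀ * S = 1 := hS.1
  have hSS' : S * Sᵀ = 1 := hS.2
  have hTT : Tᵀ * T = 1 := hT.1
  have hTT' : T * Tᵀ = 1 := hT.2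
  have gram_left : (Sᵀ * B * T) * (Sᵀ * B * T)ᵀ = Sᵀ * (B * Bᵀ) * S := by
    simp only [transpose_mul, transpose_transpose, mul_assoc]
    rw [← mul_assoc T, hTT', one_mul]
  have gram_right : (Sᵀ * B * T)ᵀ * (Sᵀ * B * T) = Tᵀ * (Bᵀ * B) * T := by
    simp only [transpose_mul, transpose_transpose, mul_assoc]
    rw [← mul_assoc S, hSS', one_mul]
  exact ⟨gram_left ▸ mul_mul_eq_mul_add_smul_one_of_sub_smul_one_eq_mul hSS hleft,
    gram_right ▸ mul_mul_eq_mul_add_smul_one_of_sub_smul_one_eq_mul hTT hright⟩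
end

section
/- Let B be an m-by-m real upper bidiagonal matrix all of whose diagonal entries B(i,i) and superdiagonal entries B(i,i+1) are nonzero, and let σ ≥ 0 be such that σ² is not an eigenvalue of BᵀB (equivalently, σ is not a singular value of B). Let S and T be m-by-m real orthogonal upper Hessenberg matrices with all subdiagonal entries positive, and let L and R be upper triangular matrices, such that BBᵀ − σ²I = S·L and BᵀB − σ²I = T·R. Then B̄ := Sᵀ B T is upper bidiagonal. -/
/-!
Because `B (BᵀB − σ²I) = (BBᵀ − σ²I) B`, the two factorizations give `B T R = S L B`, hence
`SᵀBT = L B R⁻¹`, a product of upper triangular matrices. Symmetrically `TᵀBᵀS = R Bᵀ L⁻¹`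
is upper Hessenberg, since `Bᵀ` is, so `SᵀBT` vanishes above its superdiagonal as well.
Both `R` and `L` are invertible because `det (BBᵀ − σ²I) = det (BᵀB − σ²I) ≠ 0`.
-/

namespace Matrix

section Shift

variable {n α : Type*} [Fintype n] [DecidableEq n] [CommRing α]

theorem det_mul_sub_smul_one_comm (A B : Matrix n n α) (c : α) :
    (A * B - c • 1).det = (B * A - c • 1).det := by
  have h (M : Matrix n n α) : (M - c • 1).det = (-1) ^ Fintype.card n * M.charpoly.eval c := by
    rw [eval_charpoly, ← det_neg, neg_sub, scalar_apply, smul_one_eq_diagonal]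
  rw [h, h, charpoly_mul_comm]

theorem isUnit_det_sub_smul_one {K : Type*} [Field K] {M : Matrix n n K} {c : K}
    (h : ∀ v : n → K, M *ᵥ v = c • v → v = 0) : IsUnit (M - c • 1).det := by
  rw [isUnit_iff_ne_zero, ne_eq, ← exists_mulVec_eq_zero_iff]
  rintro ⟨v, hv, hMv⟩
  rw [sub_mulVec, smul_mulVec, one_mulVec, sub_eq_zero] at hMv
  exact hv (h v hMv)

theorem transpose_mul_mul_eq_mul_mul_inv {X Y P Q U V : Matrix n n α} {c : α}
    (hXY : X * Y - c • 1 = P * U) (hYX : Y * X - c • 1 = Q * V)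
    (hP : Pᵀ * P = 1) (hV : IsUnit V.det) :
    Pᵀ * X * Q = U * X * V⁻¹ := by
  have hX : X * (Q * V) = P * U * X := by
    rw [← hXY, ← hYX, mul_sub, sub_mul, Matrix.mul_smul, Matrix.smul_mul, mul_one, one_mul,
      mul_assoc]
  calc Pᵀ * X * Q = Pᵀ * (X * (Q * V)) * V⁻¹ := by
        simp only [mul_assoc, mul_nonsing_inv V hV, mul_one]
    _ = U * X * V⁻¹ := by rw [hX, ← mul_assoc, ← mul_assoc, hP, one_mul]

end Shift

section Bandwidth

variable {m : ℕ} {α : Type*}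

/-- `p = 0` means upper triangular, `p = 1` upper Hessenberg. -/
def HasLowerBandwidth [Zero α] (M : Matrix (Fin m) (Fin m) α) (p : ℕ) : Prop :=
  ∀ i j : Fin m, j.val + p < i.val → M i j = 0

theorem HasLowerBandwidth.mul [NonUnitalNonAssocSemiring α] {A B : Matrix (Fin m) (Fin m) α}
    {p q : ℕ} (hA : A.HasLowerBandwidth p) (hB : B.HasLowerBandwidth q) :
    (A * B).HasLowerBandwidth (p + q) := by
  intro i j hij
  rw [mul_apply]
  refine Finset.sum_eq_zero fun k _ => ?_
  by_cases hk : k.val + p < i.val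
  · rw [hA i k hk, zero_mul]
  · rw [hB k j (by omega), mul_zero]

theorem hasLowerBandwidth_zero_iff_blockTriangular [Zero α] {M : Matrix (Fin m) (Fin m) α} :
    M.HasLowerBandwidth 0 ↔ M.BlockTriangular id :=
  forall₂_congr fun _ _ => imp_congr_left Fin.lt_def.symm

theorem HasLowerBandwidth.inv [CommRing α] {M : Matrix (Fin m) (Fin m) α}
    (hM : M.HasLowerBandwidth 0) : M⁻¹.HasLowerBandwidth 0 := by
  by_cases hdet : IsUnit M.det
  · have := M.invertibleOfIsUnitDet hdet
    exact hasLowerBandwidth_zero_iff_blockTriangular.mpr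
      (blockTriangular_inv_of_blockTriangular (hasLowerBandwidth_zero_iff_blockTriangular.mp hM))
  · rw [nonsing_inv_apply_not_isUnit M hdet]
    exact fun _ _ _ => rfl

end Bandwidth

end Matrix

open Matrix

theorem svd_step_preserves_bidiagonal_general (m : ℕ) (B L R S T : Matrix (Fin m) (Fin m) ℝ)
    (σ : ℝ)
    (hbd : ∀ i j : Fin m, ¬(j.val = i.val ∨ j.val = i.val + 1) → B i j = 0)
    (hnoteig : ∀ v : Fin m → ℝ, (Bᵀ * B).mulVec v = σ ^ 2 • v → v = 0)
    (hS : S ∈ Matrix.orthogonalGroup (Fin m) ℝ)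
    (hT : T ∈ Matrix.orthogonalGroup (Fin m) ℝ)
    (hL : ∀ i j : Fin m, j.val < i.val → L i j = 0)
    (hR : ∀ i j : Fin m, j.val < i.val → R i j = 0)
    (hleft : B * Bᵀ - σ ^ 2 • (1 : Matrix (Fin m) (Fin m) ℝ) = S * L)
    (hright : Bᵀ * B - σ ^ 2 • (1 : Matrix (Fin m) (Fin m) ℝ) = T * R) :
    ∀ i j : Fin m, ¬(j.val = i.val ∨ j.val = i.val + 1) → (Sᵀ * B * T) i j = 0 := by
  have hshift := isUnit_det_sub_smul_one hnoteig
  have hRdet : IsUnit R.det := isUnit_of_mul_isUnit_right (by rwa [← det_mul, ← hright])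
  have hLdet : IsUnit L.det := isUnit_of_mul_isUnit_right <| by
    rwa [← det_mul, ← hleft, det_mul_sub_smul_one_comm]
  have hSBT : Sᵀ * B * T = L * B * R⁻¹ :=
    transpose_mul_mul_eq_mul_mul_inv hleft hright ((mem_orthogonalGroup_iff' _ _).mp hS) hRdet
  have hTBS : Tᵀ * Bᵀ * S = R * Bᵀ * L⁻¹ :=
    transpose_mul_mul_eq_mul_mul_inv hright hleft ((mem_orthogonalGroup_iff' _ _).mp hT) hLdet
  replace hL : L.HasLowerBandwidth 0 := hL
  replace hR : R.HasLowerBandwidth 0 := hR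
  have hB : B.HasLowerBandwidth 0 := fun i j h => hbd i j (by omega)
  have hBt : Bᵀ.HasLowerBandwidth 1 := fun i j h => hbd j i (by omega)
  have hlower : (Sᵀ * B * T).HasLowerBandwidth 0 := hSBT ▸ ((hL.mul hB).mul hR.inv :)
  have hupper : (Sᵀ * B * T)ᵀ.HasLowerBandwidth 1 := by
    rw [transpose_mul, transpose_mul, transpose_transpose, ← mul_assoc, hTBS]
    exact (hR.mul hBt).mul hL.inv
  intro i j hij
  rcases Nat.lt_or_ge j.val i.val with hji | hij_le
  · exact hlower i j hji
  · exact hupper j i (by omega)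

/-- The SVD step of Golub and Kahan preserves upper bidiagonal structure: if `B`
is upper bidiagonal with nonzero diagonal and superdiagonal, `σ ≥ 0` with `σ²`
not an eigenvalue of `BᵀB`, and `BBᵀ − σ²I = S·L`, `BᵀB − σ²I = T·R` with `S, T`
orthogonal upper Hessenberg with positive subdiagonals and `L, R` upper
triangular, then `B̄ := SᵀBT` is upper bidiagonal. -/
theorem svd_step_preserves_bidiagonal (m : ℕ) (B L R S T : Matrix (Fin m) (Fin m) ℝ)
    (σ : ℝ) (hσ : 0 ≤ σ)
    (hbd : ∀ i j : Fin m, ¬(j.val = i.val ∨ j.val = i.val + 1) → B i j = 0)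
    (hdiag : ∀ i : Fin m, B i i ≠ 0)
    (hsuper : ∀ i j : Fin m, j.val = i.val + 1 → B i j ≠ 0)
    (hnoteig : ∀ v : Fin m → ℝ, (Bᵀ * B).mulVec v = σ ^ 2 • v → v = 0)
    (hS : S ∈ Matrix.orthogonalGroup (Fin m) ℝ)
    (hShess : ∀ i j : Fin m, j.val + 1 < i.val → S i j = 0)
    (hSsub : ∀ i j : Fin m, i.val = j.val + 1 → 0 < S i j)
    (hT : T ∈ Matrix.orthogonalGroup (Fin m) ℝ)
    (hThess : ∀ i j : Fin m, j.val + 1 < i.val → T i j = 0)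
    (hTsub : ∀ i j : Fin m, i.val = j.val + 1 → 0 < T i j)
    (hL : ∀ i j : Fin m, j.val < i.val → L i j = 0)
    (hR : ∀ i j : Fin m, j.val < i.val → R i j = 0)
    (hleft : B * Bᵀ - σ ^ 2 • (1 : Matrix (Fin m) (Fin m) ℝ) = S * L)
    (hright : Bᵀ * B - σ ^ 2 • (1 : Matrix (Fin m) (Fin m) ℝ) = T * R) :
    ∀ i j : Fin m, ¬(j.val = i.val ∨ j.val = i.val + 1) → (Sᵀ * B * T) i j = 0 :=
  svd_step_preserves_bidiagonal_general m B L R S T σ hbd hnoteig hS hT hL hR hleft hright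
end
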